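/- arXiv:1510.03129 — 8 statements merged into one kernel-verified Lean document; each statement's English description precedes it below -/
import Mathlib

section
/- Let p be an odd prime, k ≥ 1 an integer, and a, b ∈ E_p with b ≠ 1, where E_p = {x ∈ Q_p : |x|_p = 1, |x−1|_p ≤ 1/p}. Define g(x) = (a²b²x^k + 1)/(a²x^k + b²). Then g maps E_p into E_p and for all x, y ∈ E_p, |g(x) − g(y)|_p ≤ (1/p)|x − y|_p. -/
def Ep (p : ℕ) [Fact p.Prime] : Set ℚ_[p] :=
  {x | ‖x‖ = 1 ∧ ‖x - 1‖ ≤ 1 / (p : ℝ)}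

section aux

variable {p : ℕ} [Fact p.Prime]

lemma Ep_inv_p_lt_one : (1 : ℝ) / (p : ℝ) < 1 := by
  have hp := (Fact.out : p.Prime).one_lt
  rw [div_lt_one (by exact_mod_cast Nat.lt_of_lt_of_le Nat.zero_lt_one hp.le)]
  exact_mod_cast hp

lemma Ep_one_mem : (1 : ℚ_[p]) ∈ Ep p := by
  refine ⟨by simp, ?_⟩
  rw [sub_self, norm_zero]
  positivity

lemma Ep_mul {u v : ℚ_[p]} (hu : u ∈ Ep p) (hv : v ∈ Ep p) : u * v ∈ Ep p := by
  obtain ⟨hu1, hu2⟩ := hu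
  obtain ⟨hv1, hv2⟩ := hv
  refine ⟨by rw [norm_mul, hu1, hv1, mul_one], ?_⟩
  have key : u * v - 1 = (u - 1) * v + (v - 1) := by ring
  rw [key]
  refine le_trans (Padic.nonarchimedean _ _) (max_le ?_ hv2)
  rw [norm_mul, hv1, mul_one]
  exact hu2

lemma Ep_pow {u : ℚ_[p]} (hu : u ∈ Ep p) (n : ℕ) : u ^ n ∈ Ep p := by
  induction n with
  | zero => simpa using Ep_one_mem
  | succ m ih => rw [pow_succ]; exact Ep_mul ih hu

lemma Ep_add_norm (hp : p ≠ 2) {u v : ℚ_[p]} (hu : u ∈ Ep p) (hv : v ∈ Ep p) :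
    ‖u + v‖ = 1 := by
  obtain ⟨hu1, hu2⟩ := hu
  obtain ⟨hv1, hv2⟩ := hv
  have h2 : ‖(2 : ℚ_[p])‖ = 1 := by
    have hle : ‖((2 : ℤ) : ℚ_[p])‖ ≤ 1 := Padic.norm_int_le_one 2
    have : ¬ ((p : ℤ) ∣ 2) := by
      intro h
      have h2 : p ∣ 2 := by exact_mod_cast h
      exact hp ((Nat.prime_dvd_prime_iff_eq Fact.out Nat.prime_two).mp h2)
    have := (Padic.norm_intCast_lt_one_iff (p := p) (k := 2)).not.mpr this
    push_cast at hle this ⊢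
    linarith [lt_or_eq_of_le hle]
  have hpert : ‖(u - 1) + (v - 1)‖ < 1 := by
    refine lt_of_le_of_lt (Padic.nonarchimedean _ _) ?_
    exact max_lt (lt_of_le_of_lt hu2 Ep_inv_p_lt_one) (lt_of_le_of_lt hv2 Ep_inv_p_lt_one)
  have key : u + v = 2 + ((u - 1) + (v - 1)) := by ring
  rw [key, Padic.add_eq_max_of_ne (by rw [h2]; exact (ne_of_lt hpert).symm), h2]
  exact max_eq_left (le_of_lt (h2 ▸ hpert))

lemma Ep_sub_pow_le {x y : ℚ_[p]} (hx : ‖x‖ = 1) (hy : ‖y‖ = 1) (n : ℕ) :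
    ‖x ^ n - y ^ n‖ ≤ ‖x - y‖ := by
  induction n with
  | zero => simpa using norm_nonneg _
  | succ m ih =>
    have key : x ^ (m + 1) - y ^ (m + 1) = x * (x ^ m - y ^ m) + (x - y) * y ^ m := by
      ring
    rw [key]
    refine le_trans (Padic.nonarchimedean _ _) (max_le ?_ ?_)
    · rw [norm_mul, hx, one_mul]; exact ih
    · rw [norm_mul, norm_pow, hy, one_pow, mul_one]

end aux

theorem g_maps_Ep_and_contraction (p : ℕ) [Fact p.Prime] (hp : p ≠ 2)
    (k : ℕ) (hk : 1 ≤ k) (a b : ℚ_[p]) (ha : a ∈ Ep p) (hb : b ∈ Ep p)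
    (hb1 : b ≠ 1) :
    (∀ x ∈ Ep p, (a ^ 2 * b ^ 2 * x ^ k + 1) / (a ^ 2 * x ^ k + b ^ 2) ∈ Ep p) ∧
    (∀ x ∈ Ep p, ∀ y ∈ Ep p,
      ‖(a ^ 2 * b ^ 2 * x ^ k + 1) / (a ^ 2 * x ^ k + b ^ 2) -
        (a ^ 2 * b ^ 2 * y ^ k + 1) / (a ^ 2 * y ^ k + b ^ 2)‖ ≤
        (1 / (p : ℝ)) * ‖x - y‖) := by
  have ha2 : a ^ 2 ∈ Ep p := Ep_pow ha 2
  have hb2 : b ^ 2 ∈ Ep p := Ep_pow hb 2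
  have hb4 : b ^ 2 * b ^ 2 ∈ Ep p := Ep_mul hb2 hb2
  have hD : ∀ x ∈ Ep p, ‖a ^ 2 * x ^ k + b ^ 2‖ = 1 := fun x hx =>
    Ep_add_norm hp (Ep_mul ha2 (Ep_pow hx k)) hb2
  have hDne : ∀ x ∈ Ep p, a ^ 2 * x ^ k + b ^ 2 ≠ 0 := by
    intro x hx h
    have := hD x hx
    rw [h, norm_zero] at this
    exact one_ne_zero this.symm
  have hN : ∀ x ∈ Ep p, ‖a ^ 2 * b ^ 2 * x ^ k + 1‖ = 1 := fun x hx =>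
    Ep_add_norm hp (Ep_mul (Ep_mul ha2 hb2) (Ep_pow hx k)) Ep_one_mem
  constructor
  · intro x hx
    have hax : a ^ 2 * x ^ k ∈ Ep p := Ep_mul ha2 (Ep_pow hx k)
    constructor
    · rw [norm_div, hN x hx, hD x hx, div_one]
    · have key : (a ^ 2 * b ^ 2 * x ^ k + 1) / (a ^ 2 * x ^ k + b ^ 2) - 1 =
          (a ^ 2 * x ^ k - 1) * (b ^ 2 - 1) / (a ^ 2 * x ^ k + b ^ 2) := by
        field_simp [hDne x hx]
        ring
      rw [key, norm_div, hD x hx, div_one, norm_mul]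
      calc ‖a ^ 2 * x ^ k - 1‖ * ‖b ^ 2 - 1‖ ≤ 1 * (1 / (p : ℝ)) := by
            refine mul_le_mul ?_ hb2.2 (norm_nonneg _) zero_le_one
            exact le_trans hax.2 (le_of_lt Ep_inv_p_lt_one)
        _ = 1 / (p : ℝ) := one_mul _
  · intro x hx y hy
    have key : (a ^ 2 * b ^ 2 * x ^ k + 1) / (a ^ 2 * x ^ k + b ^ 2) -
        (a ^ 2 * b ^ 2 * y ^ k + 1) / (a ^ 2 * y ^ k + b ^ 2) =
        a ^ 2 * (b ^ 2 * b ^ 2 - 1) * (x ^ k - y ^ k) /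
          ((a ^ 2 * x ^ k + b ^ 2) * (a ^ 2 * y ^ k + b ^ 2)) := by
      field_simp [hDne x hx, hDne y hy]
      ring
    have hDD : ‖(a ^ 2 * x ^ k + b ^ 2) * (a ^ 2 * y ^ k + b ^ 2)‖ = 1 := by
      rw [norm_mul, hD x hx, hD y hy, mul_one]
    rw [key, norm_div, hDD, div_one, norm_mul, norm_mul, ha2.1, one_mul]
    refine mul_le_mul hb4.2 (Ep_sub_pow_le hx.1 hy.1 k) (norm_nonneg _) (by positivity)
end

section
/- Let p be an odd prime, k ≥ 1 an integer, and a, b ∈ E_p with b ≠ 1, where E_p = {x ∈ Q_p : |x|_p = 1, |x−1|_p ≤ 1/p}. Then the function g(x) = (a²b²x^k + 1)/(a²x^k + b²) has exactly one fixed point in E_p. -/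
open NNReal


namespace EpAux

variable {p : ℕ} [Fact p.Prime]

lemma p_inv_lt_one : 1 / (p : ℝ) < 1 := by
  have hp : (1 : ℝ) < p := by exact_mod_cast (Fact.out : p.Prime).one_lt
  rw [div_lt_one (by linarith)]; exact hp

lemma norm_one_of_close {x : ℚ_[p]} (h : ‖x - 1‖ ≤ 1 / (p : ℝ)) : ‖x‖ = 1 := by
  have h1 : ‖x - 1‖ < 1 := lt_of_le_of_lt h p_inv_lt_one
  have := Padic.add_eq_max_of_ne (q := x - 1) (r := 1)
    (by simp; exact ne_of_lt h1)
  simpa [max_eq_right (le_of_lt h1)] using this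

lemma mem_iff {x : ℚ_[p]} : x ∈ Ep p ↔ ‖x - 1‖ ≤ 1 / (p : ℝ) := by
  constructor
  · exact fun h => h.2
  · exact fun h => ⟨norm_one_of_close h, h⟩

lemma mul_mem {x y : ℚ_[p]} (hx : x ∈ Ep p) (hy : y ∈ Ep p) : x * y ∈ Ep p := by
  rw [mem_iff]
  have : x * y - 1 = x * (y - 1) + (x - 1) := by ring
  rw [this]
  refine le_trans (Padic.nonarchimedean _ _) (max_le ?_ hx.2)
  rw [norm_mul, hx.1, one_mul]; exact hy.2

lemma pow_mem {x : ℚ_[p]} (hx : x ∈ Ep p) (n : ℕ) : x ^ n ∈ Ep p := by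
  induction n with
  | zero => simpa [mem_iff] using by positivity
  | succ n ih => rw [pow_succ]; exact mul_mem ih hx

lemma one_mem : (1 : ℚ_[p]) ∈ Ep p := by
  rw [mem_iff]; simpa using by positivity

/-- Norm of the denominator is 1. -/
lemma denom_norm (hp : p ≠ 2) {u v : ℚ_[p]} (hu : u ∈ Ep p) (hv : v ∈ Ep p) :
    ‖u + v‖ = 1 := by
  have h2 : ‖(2 : ℚ_[p])‖ = 1 := by
    have : ¬ (p : ℤ) ∣ 2 := by
      intro h
      have h' : p ∣ 2 := by exact_mod_cast h
      exact hp ((Nat.prime_dvd_prime_iff_eq Fact.out Nat.prime_two).mp h')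
    have := (Padic.norm_intCast_lt_one_iff (k := (2 : ℤ))).not.mpr (by exact_mod_cast this)
    push_neg at this
    have h2le : ‖((2 : ℤ) : ℚ_[p])‖ ≤ 1 := Padic.norm_int_le_one 2
    have : ‖((2 : ℤ) : ℚ_[p])‖ = 1 := le_antisymm h2le this
    simpa using this
  have hsmall : ‖u + v - 2‖ < 1 := by
    have : u + v - 2 = (u - 1) + (v - 1) := by ring
    rw [this]
    refine lt_of_le_of_lt (le_trans (Padic.nonarchimedean _ _)
      (max_le hu.2 hv.2)) p_inv_lt_one
  have hne : ‖u + v - 2‖ ≠ ‖(2 : ℚ_[p])‖ := by rw [h2]; exact ne_of_lt hsmall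
  have := Padic.add_eq_max_of_ne hne
  simp only [sub_add_cancel] at this
  rw [this, h2, max_eq_right (le_of_lt (h2 ▸ hsmall))]

lemma pow_sub_pow_norm_le {x y : ℚ_[p]} (hx : ‖x‖ ≤ 1) (hy : ‖y‖ ≤ 1) (n : ℕ) :
    ‖x ^ n - y ^ n‖ ≤ ‖x - y‖ := by
  induction n with
  | zero => simp
  | succ n ih =>
    have : x ^ (n + 1) - y ^ (n + 1) = x * (x ^ n - y ^ n) + y ^ n * (x - y) := by ring
    rw [this]
    refine le_trans (Padic.nonarchimedean _ _) (max_le ?_ ?_)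
    · calc ‖x * (x ^ n - y ^ n)‖ = ‖x‖ * ‖x ^ n - y ^ n‖ := norm_mul _ _
        _ ≤ 1 * ‖x - y‖ := mul_le_mul hx ih (norm_nonneg _) zero_le_one
        _ = ‖x - y‖ := one_mul _
    · calc ‖y ^ n * (x - y)‖ = ‖y ^ n‖ * ‖x - y‖ := norm_mul _ _
        _ ≤ 1 * ‖x - y‖ := by
            refine mul_le_mul ?_ le_rfl (norm_nonneg _) zero_le_one
            simpa using pow_le_one₀ (norm_nonneg y) hy
        _ = ‖x - y‖ := one_mul _

end EpAux

open EpAux in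
theorem g_unique_fixed_point (p : ℕ) [Fact p.Prime] (hp : p ≠ 2)
    (k : ℕ) (hk : 1 ≤ k) (a b : ℚ_[p]) (ha : a ∈ Ep p) (hb : b ∈ Ep p)
    (hb1 : b ≠ 1) :
    ∃! x : ℚ_[p], x ∈ Ep p ∧
      (a ^ 2 * b ^ 2 * x ^ k + 1) / (a ^ 2 * x ^ k + b ^ 2) = x := by
  classical
  set g : ℚ_[p] → ℚ_[p] := fun x => (a ^ 2 * b ^ 2 * x ^ k + 1) / (a ^ 2 * x ^ k + b ^ 2)
    with hg
  have ha2 : a ^ 2 ∈ Ep p := pow_mem ha 2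
  have hb2 : b ^ 2 ∈ Ep p := pow_mem hb 2
  have hb4 : b ^ 4 ∈ Ep p := pow_mem hb 4
  -- denominator facts
  have hD : ∀ x ∈ Ep p, ‖a ^ 2 * x ^ k + b ^ 2‖ = 1 := fun x hx =>
    denom_norm hp (mul_mem ha2 (pow_mem hx k)) hb2
  have hDne : ∀ x ∈ Ep p, a ^ 2 * x ^ k + b ^ 2 ≠ 0 := by
    intro x hx h0
    have := hD x hx
    rw [h0] at this; simp at this
  -- g maps Ep into Ep
  have hmaps : ∀ x ∈ Ep p, g x ∈ Ep p := by
    intro x hx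
    rw [mem_iff]
    have hDx := hDne x hx
    have key : g x - 1 = (a ^ 2 * x ^ k - 1) * (b ^ 2 - 1) / (a ^ 2 * x ^ k + b ^ 2) := by
      simp only [hg]
      field_simp
      ring
    rw [key, norm_div, hD x hx, div_one, norm_mul]
    calc ‖a ^ 2 * x ^ k - 1‖ * ‖b ^ 2 - 1‖ ≤ 1 * (1 / (p : ℝ)) := by
          refine mul_le_mul ?_ hb2.2 (norm_nonneg _) zero_le_one
          exact le_trans (mul_mem ha2 (pow_mem hx k)).2 (le_of_lt p_inv_lt_one)
      _ = 1 / (p : ℝ) := one_mul _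
  -- contraction estimate
  have hcontr : ∀ x ∈ Ep p, ∀ y ∈ Ep p,
      ‖g x - g y‖ ≤ (1 / (p : ℝ)) * ‖x - y‖ := by
    intro x hx y hy
    have hDx := hDne x hx
    have hDy := hDne y hy
    have key : g x - g y = a ^ 2 * (b ^ 4 - 1) * (x ^ k - y ^ k) /
        ((a ^ 2 * x ^ k + b ^ 2) * (a ^ 2 * y ^ k + b ^ 2)) := by
      simp only [hg]
      field_simp
      ring
    rw [key, norm_div, norm_mul (a ^ 2 * x ^ k + b ^ 2), hD x hx, hD y hy, one_mul, div_one,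
      norm_mul, norm_mul, ha2.1, one_mul]
    refine mul_le_mul hb4.2 (pow_sub_pow_norm_le (le_of_eq hx.1) (le_of_eq hy.1) k)
      (norm_nonneg _) (by positivity)
  -- Ep is a closed set, hence complete
  have hclosed : IsClosed (Ep p) := by
    have : Ep p = Metric.closedBall (1 : ℚ_[p]) (1 / (p : ℝ)) := by
      ext x
      rw [Metric.mem_closedBall, dist_eq_norm, mem_iff]
    rw [this]
    exact Metric.isClosed_closedBall
  haveI : CompleteSpace (Ep p) := hclosed.completeSpace_coe
  haveI : Nonempty (Ep p) := ⟨⟨1, one_mem⟩⟩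
  -- the contracting map on the subtype
  set G : Ep p → Ep p := fun x => ⟨g x.1, hmaps x.1 x.2⟩ with hG
  have hKlt : ((p : ℝ≥0)⁻¹ : ℝ≥0) < 1 := by
    rw [inv_lt_one_iff₀]
    right
    exact_mod_cast (Fact.out : p.Prime).one_lt
  have hC : ContractingWith (p : ℝ≥0)⁻¹ G := by
    refine ⟨hKlt, LipschitzWith.of_dist_le_mul fun x y => ?_⟩
    have := hcontr x.1 x.2 y.1 y.2
    simp only [Subtype.dist_eq, dist_eq_norm]
    have hcoe : ((((p : ℝ≥0))⁻¹ : ℝ≥0) : ℝ) = 1 / (p : ℝ) := by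
      simp [one_div]
    rw [hcoe]
    exact this
  set x₀ : Ep p := hC.fixedPoint G with hx₀def
  have hx₀ : G x₀ = x₀ := hC.fixedPoint_isFixedPt
  have hfix : g x₀.1 = x₀.1 := by
    have := congrArg Subtype.val hx₀
    simpa [hG] using this
  refine ⟨x₀.1, ⟨x₀.2, hfix⟩, ?_⟩
  rintro y ⟨hy, hyfix⟩
  -- uniqueness
  by_contra hne
  have h1 : ‖y - x₀.1‖ ≤ (1 / (p : ℝ)) * ‖y - x₀.1‖ := by
    have := hcontr y hy x₀.1 x₀.2
    have hy' : g y = y := hyfix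
    rwa [hy', hfix] at this
  have hpos : 0 < ‖y - x₀.1‖ := by
    rw [norm_pos_iff]
    exact sub_ne_zero_of_ne hne
  nlinarith [p_inv_lt_one (p := p)]
end

section
/- Let p be an odd prime, k an odd positive integer, and a, b ∈ E_p with max(|k|_p, |a−1|_p) < |b−1|_p, where E_p = {x ∈ Q_p : |x|_p = 1, |x−1|_p ≤ 1/p}. Then the function f(u) = a²((b²u+1)/(u+b²))^k has at least one fixed point u ∈ Q_p with |u+1|_p < |b−1|_p (in particular u ∈ −E_p). -/
open Finset

section Aux

variable {p : ℕ} [Fact p.Prime]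

/-- Discreteness of the p-adic norm: a strict inequality improves by a factor of `p⁻¹`. -/
lemma padic_norm_lt_imp (z w : ℚ_[p]) (hw : w ≠ 0) (h : ‖z‖ < ‖w‖) :
    ‖z‖ ≤ ‖w‖ * (p : ℝ)⁻¹ := by
  have hp1 : (1 : ℝ) < (p : ℝ) := by
    exact_mod_cast (Fact.out : p.Prime).one_lt
  rcases eq_or_ne z 0 with rfl | hz
  · simp only [norm_zero]
    positivity
  · rw [Padic.norm_eq_zpow_neg_valuation hz, Padic.norm_eq_zpow_neg_valuation hw] at *
    have hval : w.valuation < z.valuation := by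
      by_contra hcon
      push_neg at hcon
      exact absurd (zpow_le_zpow_right₀ hp1.le (neg_le_neg hcon)) (not_le.mpr h)
    have : w.valuation + 1 ≤ z.valuation := hval
    calc ((p : ℝ)) ^ (-z.valuation) ≤ (p : ℝ) ^ (-(w.valuation + 1)) := by
          apply zpow_le_zpow_right₀ hp1.le
          omega
      _ = (p : ℝ) ^ (-w.valuation) * (p : ℝ)⁻¹ := by
          rw [neg_add, zpow_add₀ (by positivity), zpow_neg_one]

lemma mul_sub_one_norm_le {x y : ℚ_[p]} {ε : ℝ} (hx1 : ‖x‖ ≤ 1)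
    (hx : ‖x - 1‖ ≤ ε) (hy : ‖y - 1‖ ≤ ε) : ‖x * y - 1‖ ≤ ε := by
  have : x * y - 1 = x * (y - 1) + (x - 1) := by ring
  rw [this]
  refine le_trans (Padic.nonarchimedean _ _) (max_le ?_ hx)
  rw [norm_mul]
  calc ‖x‖ * ‖y - 1‖ ≤ 1 * ε := by
        apply mul_le_mul hx1 hy (norm_nonneg _) zero_le_one
    _ = ε := one_mul ε

lemma pow_sub_one_norm_le {x : ℚ_[p]} {ε : ℝ} (hx1 : ‖x‖ ≤ 1)
    (hx : ‖x - 1‖ ≤ ε) (n : ℕ) : ‖x ^ n - 1‖ ≤ ε := by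
  have hε : 0 ≤ ε := le_trans (norm_nonneg _) hx
  induction n with
  | zero => simpa using hε
  | succ n ih =>
      rw [pow_succ, mul_comm]
      exact mul_sub_one_norm_le hx1 hx (by simpa using ih)

lemma geom_sum_sub_card_norm_le {x y : ℚ_[p]} {ε : ℝ} (hε : ε ≤ 1)
    (hx : ‖x - 1‖ ≤ ε) (hy : ‖y - 1‖ ≤ ε) (n : ℕ) :
    ‖(∑ i ∈ range n, x ^ i * y ^ (n - 1 - i)) - (n : ℚ_[p])‖ ≤ ε := by
  have hε0 : 0 ≤ ε := le_trans (norm_nonneg _) hx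
  have hx1 : ‖x‖ ≤ 1 := by
    calc ‖x‖ = ‖(x - 1) + 1‖ := by ring_nf
      _ ≤ max ‖x - 1‖ ‖(1 : ℚ_[p])‖ := Padic.nonarchimedean _ _
      _ ≤ 1 := by rw [norm_one]; exact max_le (le_trans hx hε) le_rfl
  have hy1 : ‖y‖ ≤ 1 := by
    calc ‖y‖ = ‖(y - 1) + 1‖ := by ring_nf
      _ ≤ max ‖y - 1‖ ‖(1 : ℚ_[p])‖ := Padic.nonarchimedean _ _
      _ ≤ 1 := by rw [norm_one]; exact max_le (le_trans hy hε) le_rfl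
  have key : (∑ i ∈ range n, x ^ i * y ^ (n - 1 - i)) - (n : ℚ_[p])
      = ∑ i ∈ range n, (x ^ i * y ^ (n - 1 - i) - 1) := by
    rw [Finset.sum_sub_distrib, Finset.sum_const, card_range, nsmul_eq_mul, mul_one]
  rw [key]
  apply IsUltrametricDist.norm_sum_le_of_forall_le_of_nonneg hε0
  intro i _
  exact mul_sub_one_norm_le (norm_pow x i ▸ pow_le_one₀ (norm_nonneg _) hx1)
    (pow_sub_one_norm_le hx1 hx i) (pow_sub_one_norm_le hy1 hy _)

/-- Key lemma (a form of "lifting the exponent"): for `x, y ≡ 1 mod p`,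
`‖x^k - y^k‖ ≤ ‖k‖ ‖x - y‖`. -/
lemma pow_sub_pow_norm_le (k : ℕ) :
    ∀ x y : ℚ_[p], ‖x - 1‖ ≤ (p : ℝ)⁻¹ → ‖y - 1‖ ≤ (p : ℝ)⁻¹ →
      ‖x ^ k - y ^ k‖ ≤ ‖(k : ℚ_[p])‖ * ‖x - y‖ := by
  induction k using Nat.strong_induction_on with
  | _ k ih =>
    intro x y hx hy
    have hp : p.Prime := Fact.out
    have hpinv1 : ((p : ℝ))⁻¹ ≤ 1 := by
      rw [inv_le_one_iff₀]; right; exact_mod_cast hp.one_le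
    have hx1 : ‖x‖ ≤ 1 := by
      calc ‖x‖ = ‖(x - 1) + 1‖ := by ring_nf
        _ ≤ max ‖x - 1‖ ‖(1 : ℚ_[p])‖ := Padic.nonarchimedean _ _
        _ ≤ 1 := by rw [norm_one]; exact max_le (le_trans hx hpinv1) le_rfl
    have hy1 : ‖y‖ ≤ 1 := by
      calc ‖y‖ = ‖(y - 1) + 1‖ := by ring_nf
        _ ≤ max ‖y - 1‖ ‖(1 : ℚ_[p])‖ := Padic.nonarchimedean _ _
        _ ≤ 1 := by rw [norm_one]; exact max_le (le_trans hy hpinv1) le_rfl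
    rcases Nat.eq_zero_or_pos k with rfl | hkpos
    · simp
    by_cases hdvd : p ∣ k
    · -- k = p * m
      obtain ⟨m, rfl⟩ := hdvd
      have hm : 0 < m := Nat.pos_of_ne_zero (by rintro rfl; simp at hkpos)
      have hmk : m < p * m := by
        have h2 := hp.two_le
        calc m < 2 * m := by omega
          _ ≤ p * m := Nat.mul_le_mul_right m h2
      have hxp : ‖x ^ p - 1‖ ≤ (p : ℝ)⁻¹ := pow_sub_one_norm_le hx1 hx p
      have hyp : ‖y ^ p - 1‖ ≤ (p : ℝ)⁻¹ := pow_sub_one_norm_le hy1 hy p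
      have step1 : ‖(x ^ p) ^ m - (y ^ p) ^ m‖ ≤ ‖(m : ℚ_[p])‖ * ‖x ^ p - y ^ p‖ :=
        ih m hmk _ _ hxp hyp
      -- ‖x^p - y^p‖ ≤ ‖p‖ ‖x - y‖
      have hgs : (∑ i ∈ range p, x ^ i * y ^ (p - 1 - i)) * (x - y) = x ^ p - y ^ p :=
        geom_sum₂_mul x y p
      have hS : ‖∑ i ∈ range p, x ^ i * y ^ (p - 1 - i)‖ ≤ (p : ℝ)⁻¹ := by
        have h1 := geom_sum_sub_card_norm_le hpinv1 hx hy p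
        calc ‖∑ i ∈ range p, x ^ i * y ^ (p - 1 - i)‖
            = ‖((∑ i ∈ range p, x ^ i * y ^ (p - 1 - i)) - (p : ℚ_[p])) + (p : ℚ_[p])‖ := by
              congr 1; ring
          _ ≤ max ‖(∑ i ∈ range p, x ^ i * y ^ (p - 1 - i)) - (p : ℚ_[p])‖ ‖(p : ℚ_[p])‖ :=
              Padic.nonarchimedean _ _
          _ ≤ (p : ℝ)⁻¹ := max_le h1 (le_of_eq Padic.norm_p)
      have step2 : ‖x ^ p - y ^ p‖ ≤ (p : ℝ)⁻¹ * ‖x - y‖ := by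
        rw [← hgs, norm_mul]
        exact mul_le_mul_of_nonneg_right hS (norm_nonneg _)
      calc ‖x ^ (p * m) - y ^ (p * m)‖ = ‖(x ^ p) ^ m - (y ^ p) ^ m‖ := by
            rw [pow_mul, pow_mul]
        _ ≤ ‖(m : ℚ_[p])‖ * ‖x ^ p - y ^ p‖ := step1
        _ ≤ ‖(m : ℚ_[p])‖ * ((p : ℝ)⁻¹ * ‖x - y‖) := by
            apply mul_le_mul_of_nonneg_left step2 (norm_nonneg _)
        _ = ‖((p * m : ℕ) : ℚ_[p])‖ * ‖x - y‖ := by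
            push_cast
            rw [norm_mul, Padic.norm_p]
            ring
    · -- p ∤ k : ‖k‖ = 1
      have hknorm : ‖((k : ℕ) : ℚ_[p])‖ = 1 := by
        have hle : ‖((k : ℤ) : ℚ_[p])‖ ≤ 1 := Padic.norm_int_le_one _
        have hlt : ¬ ‖((k : ℤ) : ℚ_[p])‖ < 1 := by
          rw [Padic.norm_intCast_lt_one_iff]
          exact_mod_cast hdvd
        have : ‖((k : ℤ) : ℚ_[p])‖ = 1 := le_antisymm hle (not_lt.mp hlt)
        exact_mod_cast this
      have hgs : (∑ i ∈ range k, x ^ i * y ^ (k - 1 - i)) * (x - y) = x ^ k - y ^ k :=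
        geom_sum₂_mul x y k
      have hS : ‖∑ i ∈ range k, x ^ i * y ^ (k - 1 - i)‖ ≤ 1 := by
        have h1 := geom_sum_sub_card_norm_le hpinv1 hx hy k
        have hkle : ‖((k : ℕ) : ℚ_[p])‖ ≤ 1 := le_of_eq hknorm
        calc ‖∑ i ∈ range k, x ^ i * y ^ (k - 1 - i)‖
            = ‖((∑ i ∈ range k, x ^ i * y ^ (k - 1 - i)) - (k : ℚ_[p])) + (k : ℚ_[p])‖ := by
              congr 1; ring
          _ ≤ max ‖(∑ i ∈ range k, x ^ i * y ^ (k - 1 - i)) - (k : ℚ_[p])‖ ‖(k : ℚ_[p])‖ :=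
              Padic.nonarchimedean _ _
          _ ≤ 1 := max_le (le_trans h1 hpinv1) hkle
      rw [← hgs, norm_mul, hknorm, one_mul]
      calc ‖∑ i ∈ range k, x ^ i * y ^ (k - 1 - i)‖ * ‖x - y‖ ≤ 1 * ‖x - y‖ :=
            mul_le_mul_of_nonneg_right hS (norm_nonneg _)
        _ = ‖x - y‖ := one_mul _

end Aux

theorem f_fixed_point_near_neg_one (p : ℕ) [Fact p.Prime] (hp : p ≠ 2)
    (k : ℕ) (hk : 1 ≤ k) (hkodd : Odd k) (a b : ℚ_[p]) (ha : a ∈ Ep p)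
    (hb : b ∈ Ep p)
    (hmax : max ‖(k : ℚ_[p])‖ ‖a - 1‖ < ‖b - 1‖) :
    ∃ u : ℚ_[p], ‖u + 1‖ < ‖b - 1‖ ∧
      a ^ 2 * ((b ^ 2 * u + 1) / (u + b ^ 2)) ^ k = u := by
  obtain ⟨hanorm, ha2⟩ := ha
  obtain ⟨hbnorm, hb2⟩ := hb
  have hprime : p.Prime := Fact.out
  have hp1 : (1 : ℝ) < (p : ℝ) := by exact_mod_cast hprime.one_lt
  have hpinv_lt1 : (p : ℝ)⁻¹ < 1 := inv_lt_one_of_one_lt₀ hp1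
  have hpinv_pos : (0:ℝ) < (p : ℝ)⁻¹ := by positivity
  set r := ‖b - 1‖ with hr_def
  have hkr : ‖(k : ℚ_[p])‖ < r := lt_of_le_of_lt (le_max_left _ _) hmax
  have har : ‖a - 1‖ < r := lt_of_le_of_lt (le_max_right _ _) hmax
  have hknorm_pos : 0 < ‖(k : ℚ_[p])‖ := by
    rw [norm_pos_iff]
    exact Nat.cast_ne_zero.mpr (by omega)
  have hr0 : 0 < r := lt_trans hknorm_pos hkr
  have hbne : b - 1 ≠ 0 := by
    intro h; rw [hr_def, h, norm_zero] at hr0; exact lt_irrefl 0 hr0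
  have hrp : r ≤ (p : ℝ)⁻¹ := by rw [← one_div]; exact hb2
  have hap : ‖a - 1‖ ≤ (p : ℝ)⁻¹ := by rw [← one_div]; exact ha2
  have hr1 : r < 1 := lt_of_le_of_lt hrp hpinv_lt1
  -- ‖2‖ = 1
  have htwo : ‖(2 : ℚ_[p])‖ = 1 := by
    have hnd : ¬ ((p : ℤ) ∣ (2 : ℤ)) := by
      rw [show ((2:ℤ)) = ((2:ℕ):ℤ) by norm_num, Int.natCast_dvd_natCast]
      intro h
      have := Nat.le_of_dvd (by norm_num) h
      have := hprime.two_le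
      omega
    have h1 : ‖((2 : ℤ) : ℚ_[p])‖ ≤ 1 := Padic.norm_int_le_one _
    have h2 : ¬ ‖((2 : ℤ) : ℚ_[p])‖ < 1 := by
      rw [Padic.norm_intCast_lt_one_iff]; exact hnd
    have : ‖((2 : ℤ) : ℚ_[p])‖ = 1 := le_antisymm h1 (not_lt.mp h2)
    exact_mod_cast this
  -- basic norm computations
  have hbp1 : ‖b + 1‖ = 1 := by
    have heq : b + 1 = (b - 1) + 2 := by ring
    rw [heq, Padic.add_eq_max_of_ne (by rw [htwo]; exact ne_of_lt hr1), htwo]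
    exact max_eq_right hr1.le
  have hbsq : ‖b ^ 2 - 1‖ = r := by
    have heq : b ^ 2 - 1 = (b - 1) * (b + 1) := by ring
    rw [heq, norm_mul, hbp1, mul_one]
  have hbsq1 : ‖b ^ 2 + 1‖ = 1 := by
    have heq : b ^ 2 + 1 = (b ^ 2 - 1) + 2 := by ring
    rw [heq, Padic.add_eq_max_of_ne (by rw [hbsq, htwo]; exact ne_of_lt hr1), hbsq, htwo]
    exact max_eq_right hr1.le
  have hb4 : ‖b ^ 2 * b ^ 2 - 1‖ = r := by
    have heq : b ^ 2 * b ^ 2 - 1 = (b ^ 2 - 1) * (b ^ 2 + 1) := by ring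
    rw [heq, norm_mul, hbsq, hbsq1, mul_one]
  have hap1 : ‖a + 1‖ = 1 := by
    have heq : a + 1 = (a - 1) + 2 := by ring
    rw [heq, Padic.add_eq_max_of_ne (by rw [htwo]; exact ne_of_lt (lt_of_lt_of_le har hr1.le)),
      htwo]
    exact max_eq_right (lt_of_lt_of_le har hr1.le).le
  have hasq : ‖a ^ 2 - 1‖ = ‖a - 1‖ := by
    have heq : a ^ 2 - 1 = (a - 1) * (a + 1) := by ring
    rw [heq, norm_mul, hap1, mul_one]
  have hbsq_norm : ‖b ^ 2‖ = 1 := by rw [norm_pow, hbnorm, one_pow]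
  set ρ : ℝ := r * (p : ℝ)⁻¹ with hρ_def
  have hρr : ρ < r := mul_lt_of_lt_one_right hr0 hpinv_lt1
  have hρ0 : 0 ≤ ρ := by positivity
  set f : ℚ_[p] → ℚ_[p] := fun u => a ^ 2 * ((b ^ 2 * u + 1) / (u + b ^ 2)) ^ k with hf_def
  set s : Set ℚ_[p] := Metric.closedBall (-1 : ℚ_[p]) ρ with hs_def
  have hmem : ∀ u : ℚ_[p], u ∈ s ↔ ‖u + 1‖ ≤ ρ := by
    intro u
    rw [hs_def, Metric.mem_closedBall, dist_eq_norm, sub_neg_eq_add]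
  -- norms of numerator and denominator
  have hden : ∀ u : ℚ_[p], ‖u + 1‖ ≤ ρ → ‖u + b ^ 2‖ = r := by
    intro u hu
    have heq : u + b ^ 2 = (u + 1) + (b ^ 2 - 1) := by ring
    rw [heq, Padic.add_eq_max_of_ne (by rw [hbsq]; exact ne_of_lt (lt_of_le_of_lt hu hρr)),
      hbsq]
    exact max_eq_right (le_of_lt (lt_of_le_of_lt hu hρr))
  have hnum : ∀ u : ℚ_[p], ‖u + 1‖ ≤ ρ → ‖b ^ 2 * u + 1‖ = r := by
    intro u hu
    have heq : b ^ 2 * u + 1 = b ^ 2 * (u + 1) + (1 - b ^ 2) := by ring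
    have h1 : ‖b ^ 2 * (u + 1)‖ = ‖u + 1‖ := by rw [norm_mul, hbsq_norm, one_mul]
    have h2 : ‖(1 : ℚ_[p]) - b ^ 2‖ = r := by rw [norm_sub_rev, hbsq]
    rw [heq, Padic.add_eq_max_of_ne (by rw [h1, h2]; exact ne_of_lt (lt_of_le_of_lt hu hρr)),
      h1, h2]
    exact max_eq_right (le_of_lt (lt_of_le_of_lt hu hρr))
  have hdenne : ∀ u : ℚ_[p], ‖u + 1‖ ≤ ρ → u + b ^ 2 ≠ 0 := by
    intro u hu h
    have h0 := hden u hu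
    rw [h, norm_zero] at h0
    exact absurd h0 (ne_of_lt hr0)
  -- properties of φ u = (b²u+1)/(u+b²)
  have hφadd : ∀ u : ℚ_[p], ‖u + 1‖ ≤ ρ →
      ‖(b ^ 2 * u + 1) / (u + b ^ 2) + 1‖ ≤ (p : ℝ)⁻¹ := by
    intro u hu
    have hne := hdenne u hu
    have heq : (b ^ 2 * u + 1) / (u + b ^ 2) + 1 = ((b ^ 2 + 1) * (u + 1)) / (u + b ^ 2) := by
      field_simp
      ring
    rw [heq, norm_div, norm_mul, hbsq1, one_mul, hden u hu]
    rw [div_le_iff₀ hr0]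
    calc ‖u + 1‖ ≤ ρ := hu
      _ = (p:ℝ)⁻¹ * r := by rw [hρ_def]; ring
  have hφsub : ∀ u v : ℚ_[p], ‖u + 1‖ ≤ ρ → ‖v + 1‖ ≤ ρ →
      ‖(b ^ 2 * u + 1) / (u + b ^ 2) - (b ^ 2 * v + 1) / (v + b ^ 2)‖ = ‖u - v‖ / r := by
    intro u v hu hv
    have hneu := hdenne u hu
    have hnev := hdenne v hv
    have heq : (b ^ 2 * u + 1) / (u + b ^ 2) - (b ^ 2 * v + 1) / (v + b ^ 2)
        = ((b ^ 2 * b ^ 2 - 1) * (u - v)) / ((u + b ^ 2) * (v + b ^ 2)) := by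
      field_simp
      ring
    rw [heq, norm_div, norm_mul, norm_mul, hb4, hden u hu, hden v hv]
    rw [div_eq_div_iff (by positivity) hr0.ne']
    ring
  -- the Lipschitz estimate
  have hlip : ∀ u v : ℚ_[p], ‖u + 1‖ ≤ ρ → ‖v + 1‖ ≤ ρ →
      ‖f u - f v‖ ≤ (‖(k : ℚ_[p])‖ / r) * ‖u - v‖ := by
    intro u v hu hv
    set x := (b ^ 2 * u + 1) / (u + b ^ 2) with hx_def
    set y := (b ^ 2 * v + 1) / (v + b ^ 2) with hy_def
    have hfeq : f u - f v = a ^ 2 * (x ^ k - y ^ k) := by rw [hf_def]; ring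
    have hnorm_a2 : ‖a ^ 2‖ = 1 := by rw [norm_pow, hanorm, one_pow]
    have hxk : x ^ k - y ^ k = -((-x) ^ k - (-y) ^ k) := by
      rw [hkodd.neg_pow, hkodd.neg_pow]; ring
    have hxh : ‖(-x) - 1‖ ≤ (p : ℝ)⁻¹ := by
      have : (-x) - 1 = -(x + 1) := by ring
      rw [this, norm_neg]; exact hφadd u hu
    have hyh : ‖(-y) - 1‖ ≤ (p : ℝ)⁻¹ := by
      have : (-y) - 1 = -(y + 1) := by ring
      rw [this, norm_neg]; exact hφadd v hv
    have hkey := pow_sub_pow_norm_le k (-x) (-y) hxh hyh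
    have hxy : ‖(-x) - (-y)‖ = ‖u - v‖ / r := by
      have : (-x) - (-y) = -(x - y) := by ring
      rw [this, norm_neg]; exact hφsub u v hu hv
    calc ‖f u - f v‖ = ‖x ^ k - y ^ k‖ := by rw [hfeq, norm_mul, hnorm_a2, one_mul]
      _ = ‖(-x) ^ k - (-y) ^ k‖ := by rw [hxk, norm_neg]
      _ ≤ ‖(k : ℚ_[p])‖ * ‖(-x) - (-y)‖ := hkey
      _ = ‖(k : ℚ_[p])‖ * (‖u - v‖ / r) := by rw [hxy]
      _ = (‖(k : ℚ_[p])‖ / r) * ‖u - v‖ := by ring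
  -- value at -1
  have hbsqne : (-1 : ℚ_[p]) + b ^ 2 ≠ 0 := hdenne (-1) (by simpa using hρ0)
  have hfneg1 : f (-1) = -(a ^ 2) := by
    rw [hf_def]
    have hφ : (b ^ 2 * (-1) + 1) / ((-1) + b ^ 2) = -1 := by
      rw [div_eq_iff hbsqne]; ring
    simp only [hφ, hkodd.neg_one_pow]
    ring
  have hfneg1_near : ‖f (-1) + 1‖ ≤ ρ := by
    rw [hfneg1]
    have heq : -(a ^ 2) + 1 = -(a ^ 2 - 1) := by ring
    rw [heq, norm_neg, hasq]
    exact padic_norm_lt_imp _ _ hbne har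
  have hK1 : ‖(k : ℚ_[p])‖ / r ≤ 1 := le_of_lt ((div_lt_one hr0).mpr hkr)
  -- f maps s to s
  have hmaps : Set.MapsTo f s s := by
    intro u hu
    rw [hmem] at hu ⊢
    have h1 : ‖f u - f (-1)‖ ≤ ρ := by
      have := hlip u (-1) hu (by simpa using hρ0)
      calc ‖f u - f (-1)‖ ≤ (‖(k : ℚ_[p])‖ / r) * ‖u - (-1)‖ := this
        _ ≤ 1 * ρ := by
            apply mul_le_mul hK1 _ (norm_nonneg _) zero_le_one
            rw [sub_neg_eq_add]; exact hu
        _ = ρ := one_mul ρ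
    calc ‖f u + 1‖ = ‖(f u - f (-1)) + (f (-1) + 1)‖ := by congr 1; ring
      _ ≤ max ‖f u - f (-1)‖ ‖f (-1) + 1‖ := Padic.nonarchimedean _ _
      _ ≤ ρ := max_le h1 hfneg1_near
  -- contraction
  set K : NNReal := ⟨‖(k : ℚ_[p])‖ / r, by positivity⟩ with hK_def
  have hKlt : K < 1 := by
    rw [← NNReal.coe_lt_coe, NNReal.coe_one]
    exact (div_lt_one hr0).mpr hkr
  have hlips : LipschitzOnWith K f s := by
    apply LipschitzOnWith.of_dist_le_mul
    intro u hu v hv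
    rw [hmem] at hu hv
    rw [dist_eq_norm, dist_eq_norm]
    exact hlip u v hu hv
  have hcontr : ContractingWith K (hmaps.restrict f s s) :=
    ⟨hKlt, hlips.mapsToRestrict hmaps⟩
  obtain ⟨y, hys, hfy, -, -⟩ := ContractingWith.exists_fixedPoint'
    (Metric.isClosed_closedBall.isComplete) hmaps hcontr
    (show (-1 : ℚ_[p]) ∈ s by rw [hmem]; simpa using hρ0)
    (edist_ne_top _ _)
  rw [hmem] at hys
  exact ⟨y, lt_of_le_of_lt hys hρr, hfy⟩
end

section
/- Let p be an odd prime, k an odd positive integer, a, b ∈ E_p with b ≠ 1, and let r = |b−1|_p. For all u, v ∈ Q_p with |u+1|_p < r and |v+1|_p < r one has |b²u+1|_p = |u+b²|_p = |b−1|_p, and |f(u) − f(v)|_p ≤ (|k|_p/|b−1|_p)·|u−v|_p, where f(u) = a²((b²u+1)/(u+b²))^k. -/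
open Finset in
lemma geom_norm_le_one {p : ℕ} [Fact p.Prime] {u : ℚ_[p]} (hu : ‖u‖ ≤ 1) (n : ℕ) :
    ‖∑ i ∈ range n, u ^ i‖ ≤ 1 := by
  apply IsUltrametricDist.norm_sum_le_of_forall_le_of_nonneg zero_le_one
  intro i _
  rw [norm_pow]
  exact pow_le_one₀ (norm_nonneg u) hu

lemma pow_sub_one_le_aux {p : ℕ} [Fact p.Prime] {u : ℚ_[p]} (hu : ‖u‖ ≤ 1) (n : ℕ) :
    ‖u ^ n - 1‖ ≤ ‖u - 1‖ := by
  rw [← geom_sum_mul u n, norm_mul]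
  calc ‖∑ i ∈ Finset.range n, u ^ i‖ * ‖u - 1‖
      ≤ 1 * ‖u - 1‖ := by
        exact mul_le_mul_of_nonneg_right (geom_norm_le_one hu n) (norm_nonneg _)
    _ = ‖u - 1‖ := one_mul _

/-- Key lemma: if `‖u - 1‖ ≤ 1/p` then `‖u^k - 1‖ ≤ ‖k‖ * ‖u - 1‖`. -/
lemma pow_sub_one_norm_le_s12 {p : ℕ} [Fact p.Prime] :
    ∀ k : ℕ, ∀ u : ℚ_[p], ‖u - 1‖ ≤ 1 / (p : ℝ) →
      ‖u ^ k - 1‖ ≤ ‖(k : ℚ_[p])‖ * ‖u - 1‖ := by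
  have hp1 : (1 : ℝ) < p := by exact_mod_cast (Fact.out : p.Prime).one_lt
  have hp0 : (0 : ℝ) < p := lt_trans one_pos hp1
  have hple : 1 / (p : ℝ) < 1 := by rw [div_lt_one hp0]; exact hp1
  intro k
  induction k using Nat.strong_induction_on with
  | _ k ih =>
    intro u hu
    have hu1 : ‖u‖ ≤ 1 := by
      have : u = (u - 1) + 1 := by ring
      rw [this]
      exact le_trans (Padic.nonarchimedean _ _)
        (max_le (le_of_lt (lt_of_le_of_lt hu hple)) (by simp))
    rcases Nat.eq_zero_or_pos k with hk0 | hkpos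
    · subst hk0; simp
    by_cases hdvd : p ∣ k
    · -- k = p * m
      obtain ⟨m, rfl⟩ := hdvd
      have hppos : 0 < p := (Fact.out : p.Prime).pos
      have hmlt : m < p * m := by
        have hm0 : 0 < m := Nat.pos_of_mul_pos_left (by rwa [mul_comm] at hkpos)
        calc m = 1 * m := (one_mul m).symm
          _ < p * m := Nat.mul_lt_mul_of_lt_of_le (Fact.out : p.Prime).one_lt le_rfl hm0
      -- bound for ‖u^p - 1‖
      have hsum : ‖∑ i ∈ Finset.range p, u ^ i‖ ≤ 1 / (p : ℝ) := by
        have heq : (∑ i ∈ Finset.range p, u ^ i) =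
            (∑ i ∈ Finset.range p, (u ^ i - 1)) + (p : ℚ_[p]) := by
          rw [Finset.sum_sub_distrib]
          simp
        rw [heq]
        refine le_trans (Padic.nonarchimedean _ _) (max_le ?_ ?_)
        · apply IsUltrametricDist.norm_sum_le_of_forall_le_of_nonneg (by positivity)
          intro i _
          exact le_trans (pow_sub_one_le_aux hu1 i) hu
        · rw [Padic.norm_p, one_div]
      have hup : ‖u ^ p - 1‖ ≤ (1 / (p : ℝ)) * ‖u - 1‖ := by
        rw [← geom_sum_mul u p, norm_mul]
        exact mul_le_mul_of_nonneg_right hsum (norm_nonneg _)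
      have hup' : ‖u ^ p - 1‖ ≤ 1 / (p : ℝ) := by
        refine le_trans hup ?_
        calc (1 / (p : ℝ)) * ‖u - 1‖ ≤ (1 / (p : ℝ)) * 1 := by
              apply mul_le_mul_of_nonneg_left _ (by positivity)
              exact le_trans hu (le_of_lt hple)
          _ = 1 / (p : ℝ) := mul_one _
      have hkey := ih m hmlt (u ^ p) hup'
      rw [mul_comm p m, Nat.cast_mul, norm_mul, Padic.norm_p]
      calc ‖u ^ (m * p) - 1‖ = ‖(u ^ p) ^ m - 1‖ := by rw [← pow_mul, mul_comm]
        _ ≤ ‖(m : ℚ_[p])‖ * ‖u ^ p - 1‖ := hkey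
        _ ≤ ‖(m : ℚ_[p])‖ * ((1 / (p : ℝ)) * ‖u - 1‖) := by
            exact mul_le_mul_of_nonneg_left hup (norm_nonneg _)
        _ = ‖(m : ℚ_[p])‖ * (p : ℝ)⁻¹ * ‖u - 1‖ := by ring
    · -- p does not divide k, so ‖k‖ = 1
      have hk1 : ‖(k : ℚ_[p])‖ = 1 := by
        have hle : ‖((k : ℤ) : ℚ_[p])‖ ≤ 1 := Padic.norm_int_le_one _
        have hnlt : ¬ ‖((k : ℤ) : ℚ_[p])‖ < 1 := by
          rw [Padic.norm_intCast_lt_one_iff]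
          exact_mod_cast hdvd
        push_cast at hle hnlt ⊢
        linarith [lt_or_eq_of_le hle]
      rw [hk1, one_mul]
      exact pow_sub_one_le_aux hu1 k

/-- Two-variable version. -/
lemma pow_sub_pow_norm_le_s12 {p : ℕ} [Fact p.Prime] (k : ℕ) {s t : ℚ_[p]}
    (hs : ‖s - 1‖ ≤ 1 / (p : ℝ)) (ht : ‖t - 1‖ ≤ 1 / (p : ℝ)) :
    ‖s ^ k - t ^ k‖ ≤ ‖(k : ℚ_[p])‖ * ‖s - t‖ := by
  have hp1 : (1 : ℝ) < p := by exact_mod_cast (Fact.out : p.Prime).one_lt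
  have hp0 : (0 : ℝ) < p := lt_trans one_pos hp1
  have hple : 1 / (p : ℝ) < 1 := by rw [div_lt_one hp0]; exact hp1
  have ht1 : ‖t‖ = 1 := by
    have : t = (t - 1) + 1 := by ring
    rw [this, Padic.add_eq_max_of_ne, norm_one, max_eq_right]
    · exact le_of_lt (lt_of_le_of_lt ht hple)
    · rw [norm_one]; exact ne_of_lt (lt_of_le_of_lt ht hple)
  have ht0 : t ≠ 0 := by intro h; rw [h] at ht1; simp at ht1
  have hst : ‖s - t‖ ≤ 1 / (p : ℝ) := by
    have : s - t = (s - 1) + (-(t - 1)) := by ring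
    rw [this]
    exact le_trans (Padic.nonarchimedean _ _) (max_le hs (by rwa [norm_neg]))
  have hdiv : ‖s / t - 1‖ ≤ 1 / (p : ℝ) := by
    have : s / t - 1 = (s - t) / t := by field_simp
    rw [this, norm_div, ht1, div_one]
    exact hst
  have key := pow_sub_one_norm_le_s12 k (s / t) hdiv
  have heq : s ^ k - t ^ k = t ^ k * ((s / t) ^ k - 1) := by
    rw [div_pow, mul_sub, mul_one, mul_div_assoc', mul_div_cancel_left₀ _ (pow_ne_zero k ht0)]
  rw [heq, norm_mul, norm_pow, ht1, one_pow, one_mul]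
  calc ‖(s / t) ^ k - 1‖ ≤ ‖(k : ℚ_[p])‖ * ‖s / t - 1‖ := key
    _ = ‖(k : ℚ_[p])‖ * ‖s - t‖ := by
        congr 1
        have : s / t - 1 = (s - t) / t := by field_simp
        rw [this, norm_div, ht1, div_one]

theorem f_contraction_near_neg_one (p : ℕ) [Fact p.Prime] (hp : p ≠ 2)
    (k : ℕ) (hk : 1 ≤ k) (hkodd : Odd k) (a b : ℚ_[p]) (ha : a ∈ Ep p)
    (hb : b ∈ Ep p) (hb1 : b ≠ 1) (u v : ℚ_[p])
    (hu : ‖u + 1‖ < ‖b - 1‖) (hv : ‖v + 1‖ < ‖b - 1‖) :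
    ‖b ^ 2 * u + 1‖ = ‖b - 1‖ ∧ ‖u + b ^ 2‖ = ‖b - 1‖ ∧
    ‖a ^ 2 * ((b ^ 2 * u + 1) / (u + b ^ 2)) ^ k -
      a ^ 2 * ((b ^ 2 * v + 1) / (v + b ^ 2)) ^ k‖ ≤
      (‖(k : ℚ_[p])‖ / ‖b - 1‖) * ‖u - v‖ := by
  obtain ⟨hb0, hbr⟩ := hb
  obtain ⟨ha0, _⟩ := ha
  have hp1 : (1 : ℝ) < p := by exact_mod_cast (Fact.out : p.Prime).one_lt
  have hp0 : (0 : ℝ) < p := lt_trans one_pos hp1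
  have hple : 1 / (p : ℝ) < 1 := by rw [div_lt_one hp0]; exact hp1
  have hr0 : 0 < ‖b - 1‖ := norm_pos_iff.mpr (sub_ne_zero.mpr hb1)
  have hrlt : ‖b - 1‖ < 1 := lt_of_le_of_lt hbr hple
  -- ‖2‖ = 1
  have h2 : ‖(2 : ℚ_[p])‖ = 1 := by
    have hle : ‖((2 : ℤ) : ℚ_[p])‖ ≤ 1 := Padic.norm_int_le_one _
    have hnlt : ¬ ‖((2 : ℤ) : ℚ_[p])‖ < 1 := by
      rw [Padic.norm_intCast_lt_one_iff]
      intro hd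
      have h22 := Int.le_of_dvd (by norm_num) hd
      have hp2 : (2 : ℤ) ≤ p := by exact_mod_cast (Fact.out : p.Prime).two_le
      have : (p : ℤ) = 2 := le_antisymm h22 hp2
      exact hp (by exact_mod_cast this)
    push_cast at hle hnlt
    linarith [lt_or_eq_of_le hle]
  have hbp1 : ‖b + 1‖ = 1 := by
    have heq : b + 1 = (b - 1) + 2 := by ring
    rw [heq, Padic.add_eq_max_of_ne (by rw [h2]; exact ne_of_lt hrlt), h2,
      max_eq_right (le_of_lt hrlt)]
  have hbsq : ‖b ^ 2 - 1‖ = ‖b - 1‖ := by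
    have heq : b ^ 2 - 1 = (b - 1) * (b + 1) := by ring
    rw [heq, norm_mul, hbp1, mul_one]
  have hbsqp : ‖b ^ 2 + 1‖ = 1 := by
    have heq : b ^ 2 + 1 = (b ^ 2 - 1) + 2 := by ring
    rw [heq, Padic.add_eq_max_of_ne (by rw [h2, hbsq]; exact ne_of_lt hrlt), h2,
      max_eq_right (by rw [hbsq]; exact le_of_lt hrlt)]
  have hb4 : ‖b ^ 4 - 1‖ = ‖b - 1‖ := by
    have heq : b ^ 4 - 1 = (b ^ 2 - 1) * (b ^ 2 + 1) := by ring
    rw [heq, norm_mul, hbsq, hbsqp, mul_one]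
  have hbsqnorm : ‖b ^ 2‖ = 1 := by rw [norm_pow, hb0, one_pow]
  -- numerator and denominator norms (for any w with ‖w + 1‖ < r)
  have num_norm : ∀ w : ℚ_[p], ‖w + 1‖ < ‖b - 1‖ → ‖b ^ 2 * w + 1‖ = ‖b - 1‖ := by
    intro w hw
    have heq : b ^ 2 * w + 1 = b ^ 2 * (w + 1) + (1 - b ^ 2) := by ring
    have h1 : ‖b ^ 2 * (w + 1)‖ = ‖w + 1‖ := by rw [norm_mul, hbsqnorm, one_mul]
    have h2' : ‖1 - b ^ 2‖ = ‖b - 1‖ := by rw [norm_sub_rev, hbsq]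
    rw [heq, Padic.add_eq_max_of_ne (by rw [h1, h2']; exact ne_of_lt hw),
      h1, h2', max_eq_right (le_of_lt hw)]
  have den_norm : ∀ w : ℚ_[p], ‖w + 1‖ < ‖b - 1‖ → ‖w + b ^ 2‖ = ‖b - 1‖ := by
    intro w hw
    have heq : w + b ^ 2 = (w + 1) + (b ^ 2 - 1) := by ring
    rw [heq, Padic.add_eq_max_of_ne (by rw [hbsq]; exact ne_of_lt hw),
      hbsq, max_eq_right (le_of_lt hw)]
  refine ⟨num_norm u hu, den_norm u hu, ?_⟩
  -- set up x and y
  have hdu : (u + b ^ 2) ≠ 0 := by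
    intro h
    have := den_norm u hu; rw [h, norm_zero] at this; linarith
  have hdv : (v + b ^ 2) ≠ 0 := by
    intro h
    have := den_norm v hv; rw [h, norm_zero] at this; linarith
  set x := (b ^ 2 * u + 1) / (u + b ^ 2) with hxdef
  set y := (b ^ 2 * v + 1) / (v + b ^ 2) with hydef
  -- ‖x + 1‖ ≤ 1/p and ‖y + 1‖ ≤ 1/p
  have plus_one : ∀ w : ℚ_[p], (w + b ^ 2) ≠ 0 → ‖w + 1‖ < ‖b - 1‖ →
      ‖(b ^ 2 * w + 1) / (w + b ^ 2) + 1‖ ≤ 1 / (p : ℝ) := by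
    intro w hdw hw
    have heq : (b ^ 2 * w + 1) / (w + b ^ 2) + 1 = (b ^ 2 + 1) * (w + 1) / (w + b ^ 2) := by
      field_simp; ring
    have hlt : ‖(b ^ 2 * w + 1) / (w + b ^ 2) + 1‖ < 1 := by
      rw [heq, norm_div, norm_mul, hbsqp, one_mul, den_norm w hw]
      rw [div_lt_one hr0]
      exact hw
    have := (Padic.norm_le_pow_iff_norm_lt_pow_add_one
      ((b ^ 2 * w + 1) / (w + b ^ 2) + 1) (-1)).mpr (by simpa using hlt)
    simpa [one_div] using this
  have hxp : ‖(-x) - 1‖ ≤ 1 / (p : ℝ) := by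
    have : (-x) - 1 = -(x + 1) := by ring
    rw [this, norm_neg]
    exact plus_one u hdu hu
  have hyp : ‖(-y) - 1‖ ≤ 1 / (p : ℝ) := by
    have : (-y) - 1 = -(y + 1) := by ring
    rw [this, norm_neg]
    exact plus_one v hdv hv
  have key := pow_sub_pow_norm_le_s12 k hxp hyp
  have hnegs : (-x) ^ k - (-y) ^ k = -(x ^ k - y ^ k) := by
    rw [hkodd.neg_pow, hkodd.neg_pow]; ring
  have hkey2 : ‖x ^ k - y ^ k‖ ≤ ‖(k : ℚ_[p])‖ * ‖x - y‖ := by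
    calc ‖x ^ k - y ^ k‖ = ‖(-x) ^ k - (-y) ^ k‖ := by rw [hnegs, norm_neg]
      _ ≤ ‖(k : ℚ_[p])‖ * ‖(-x) - (-y)‖ := key
      _ = ‖(k : ℚ_[p])‖ * ‖x - y‖ := by
          congr 1
          have : (-x) - (-y) = -(x - y) := by ring
          rw [this, norm_neg]
  have hxy : ‖x - y‖ = ‖u - v‖ / ‖b - 1‖ := by
    have heq : x - y = (b ^ 4 - 1) * (u - v) / ((u + b ^ 2) * (v + b ^ 2)) := by
      rw [hxdef, hydef]
      field_simp
      ring
    rw [heq, norm_div, norm_mul, norm_mul, hb4, den_norm u hu, den_norm v hv]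
    rw [div_eq_div_iff (by positivity) (ne_of_gt hr0)]
    ring
  have hLHS : ‖a ^ 2 * x ^ k - a ^ 2 * y ^ k‖ = ‖x ^ k - y ^ k‖ := by
    rw [← mul_sub, norm_mul, norm_pow, ha0, one_pow, one_mul]
  rw [hLHS]
  calc ‖x ^ k - y ^ k‖ ≤ ‖(k : ℚ_[p])‖ * ‖x - y‖ := hkey2
    _ = ‖(k : ℚ_[p])‖ * (‖u - v‖ / ‖b - 1‖) := by rw [hxy]
    _ = (‖(k : ℚ_[p])‖ / ‖b - 1‖) * ‖u - v‖ := by ring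
end

section
/- Let p be an odd prime, k ≥ 1 with gcd(k,p) = 1, and suppose (p−1)/gcd(k,p−1) is even. Let a, b ∈ E_p with b ≠ 1. Then the polynomial g(x) = a²x^{k+1} − a²b²x^k + b²x − 1 has exactly gcd(k, p−1) roots x ∈ Z_p satisfying x^k ≡ −1 (mod p). -/
open scoped Classical

private lemma padicNormLtOneIffLe {p : ℕ} [Fact p.Prime] (z : ℤ_[p]) :
    ‖z‖ < 1 ↔ ‖z‖ ≤ 1 / (p : ℝ) := by
  have h := PadicInt.norm_le_pow_iff_norm_lt_pow_add_one z (-1)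
  simp only [neg_add_cancel, zpow_zero] at h
  rw [← h, zpow_neg_one]
  norm_num

private lemma padicToZModEqZeroIff {p : ℕ} [Fact p.Prime] (z : ℤ_[p]) :
    PadicInt.toZMod z = 0 ↔ ‖z‖ ≤ 1 / (p : ℝ) := by
  rw [← padicNormLtOneIffLe, PadicInt.norm_lt_one_iff_dvd, ← Ideal.mem_span_singleton,
    ← PadicInt.maximalIdeal_eq_span_p, ← PadicInt.ker_toZMod, RingHom.mem_ker]

private lemma count_neg_one (p : ℕ) [Fact p.Prime] (hp : p ≠ 2) (k : ℕ) (hk : 1 ≤ k)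
    (heven : Even ((p - 1) / Nat.gcd k (p - 1))) :
    {y : ZMod p | y ^ k = -1}.ncard = Nat.gcd k (p - 1) := by
  set d := Nat.gcd k (p - 1) with hd
  have hp3 : 3 ≤ p := by
    have := (Fact.out : p.Prime).two_le
    rcases Nat.lt_or_ge p 3 with h | h
    · interval_cases p <;> simp_all
    · exact h
  have hcard : Fintype.card (ZMod p)ˣ = p - 1 := ZMod.card_units p
  have hp1 : 0 < p - 1 := by omega
  have hdpos : 0 < d := Nat.gcd_pos_of_pos_right _ hp1
  have hddvd : d ∣ p - 1 := Nat.gcd_dvd_right _ _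
  have hddvdk : d ∣ k := Nat.gcd_dvd_left _ _
  -- generator
  obtain ⟨g, hg⟩ := IsCyclic.exists_generator (α := (ZMod p)ˣ)
  have horder : orderOf g = p - 1 := by
    rw [orderOf_eq_card_of_forall_mem_zpowers hg, Nat.card_eq_fintype_card, hcard]
  have hgp1 : g ^ (p - 1) = 1 := by rw [← horder]; exact pow_orderOf_eq_one g
  -- g ^ ((p-1)/2) = -1
  have hhalf : g ^ ((p - 1) / 2) = -1 := by
    have h2 : 2 ∣ p - 1 := by
      have : Odd p := (Fact.out : p.Prime).odd_of_ne_two hp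
      obtain ⟨m, hm⟩ := this
      omega
    set h := g ^ ((p - 1) / 2) with hh
    have hsq : h ^ 2 = 1 := by
      rw [hh, ← pow_mul, Nat.div_mul_cancel h2, hgp1]
    have hne : h ≠ 1 := by
      intro habs
      have := orderOf_dvd_of_pow_eq_one (habs : g ^ ((p-1)/2) = 1)
      rw [horder] at this
      have := Nat.le_of_dvd (by omega) this
      omega
    have hn1 : (-1 : (ZMod p)ˣ) ≠ 1 := by
      intro habs
      have : ((-1 : (ZMod p)ˣ) : ZMod p) = ((1 : (ZMod p)ˣ) : ZMod p) := by rw [habs]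
      simp at this
      haveI : Fact (2 < p) := ⟨by omega⟩
      exact ZMod.neg_one_ne_one ‹(-1 : ZMod p) = 1›
    have hsq1 : (-1 : (ZMod p)ˣ) ^ 2 = 1 := by ext; simp
    -- the set {x | x^2 = 1} has at most 2 elements
    by_contra hne2
    have hle := IsCyclic.card_pow_eq_one_le (α := (ZMod p)ˣ) (n := 2) (by norm_num)
    have hsub : ({1, h, -1} : Finset (ZMod p)ˣ) ⊆ Finset.filter (fun x => x ^ 2 = 1) Finset.univ := by
      intro x hx
      simp only [Finset.mem_insert, Finset.mem_singleton] at hx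
      rcases hx with rfl | rfl | rfl <;> simp [hsq, hsq1]
    have hcard3 : ({1, h, -1} : Finset (ZMod p)ˣ).card = 3 := by
      rw [Finset.card_insert_of_notMem, Finset.card_insert_of_notMem] <;>
        simp [Ne.symm hne, hne2, Ne.symm hn1]
    have := Finset.card_le_card hsub
    omega
  -- existence of u0 with u0 ^ k = -1
  obtain ⟨c, hc⟩ := heven
  have h1 : p - 1 = c * d + c * d := by
    have h2 := Nat.div_mul_cancel hddvd
    rw [hc] at h2
    rw [← h2]; ring
  have hc2 : (p - 1) / 2 = c * d := by omega
  have hbezout : (d : ℤ) = k * Nat.gcdA k (p - 1) + ((p - 1 : ℕ) : ℤ) * Nat.gcdB k (p - 1) :=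
    Nat.gcd_eq_gcd_ab k (p - 1)
  set t : ℤ := Nat.gcdA k (p - 1) * c with ht
  set u0 : (ZMod p)ˣ := g ^ t with hu0
  have hgz : g ^ ((p - 1 : ℕ) : ℤ) = 1 := by rw [zpow_natCast, hgp1]
  have hu0k : u0 ^ k = -1 := by
    have hkey : (k : ℤ) * t = (((p - 1) / 2 : ℕ) : ℤ) + ((p - 1 : ℕ) : ℤ) * (-(Nat.gcdB k (p - 1) * c)) := by
      have hc2' : (((p - 1) / 2 : ℕ) : ℤ) = (c : ℤ) * d := by exact_mod_cast congrArg (Nat.cast : ℕ → ℤ) hc2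
      rw [ht, hc2']
      linear_combination (-(c : ℤ)) * hbezout
    calc u0 ^ k = g ^ ((k : ℤ) * t) := by
          rw [hu0, ← zpow_natCast (g ^ t) k, ← zpow_mul, mul_comm t (k : ℤ)]
    _ = g ^ ((((p - 1) / 2 : ℕ)) : ℤ) * (g ^ ((p - 1 : ℕ) : ℤ)) ^ (-(Nat.gcdB k (p - 1) * c : ℤ)) := by
        rw [hkey, zpow_add, ← zpow_mul]
    _ = -1 := by rw [hgz, one_zpow, mul_one, zpow_natCast, hhalf]
  -- u^k = 1 ↔ u^d = 1
  have hiff : ∀ u : (ZMod p)ˣ, u ^ k = 1 ↔ u ^ d = 1 := by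
    intro u
    constructor
    · intro h
      have h1 : orderOf u ∣ k := orderOf_dvd_of_pow_eq_one h
      have h2 : orderOf u ∣ p - 1 := by
        rw [← hcard]; exact orderOf_dvd_card
      exact orderOf_dvd_iff_pow_eq_one.mp (Nat.dvd_gcd h1 h2)
    · intro h
      obtain ⟨m, hm⟩ := hddvdk
      rw [hm, pow_mul, h, one_pow]
  -- primitive d-th root of unity
  set ζ : (ZMod p)ˣ := g ^ ((p - 1) / d) with hζ
  have hordζ : orderOf ζ = d := by
    rw [hζ, orderOf_pow, horder, Nat.gcd_eq_right (Nat.div_dvd_of_dvd hddvd),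
      Nat.div_div_self hddvd (by omega)]
  haveI : NeZero d := ⟨hdpos.ne'⟩
  have hprimu : IsPrimitiveRoot ζ d := hordζ ▸ IsPrimitiveRoot.orderOf ζ
  have hprim : IsPrimitiveRoot ((ζ : ZMod p)) d := IsPrimitiveRoot.coe_units_iff.mpr hprimu
  have hcardroots : Fintype.card (rootsOfUnity d (ZMod p)) = d := by
    rw [← Nat.card_eq_fintype_card]; exact hprim.card_rootsOfUnity
  -- counting in the unit group
  have hK : ({u : (ZMod p)ˣ | u ^ d = 1} : Set (ZMod p)ˣ).ncard = d := by
    have hKeq : ({u : (ZMod p)ˣ | u ^ d = 1} : Set (ZMod p)ˣ) = (rootsOfUnity d (ZMod p) : Subgroup (ZMod p)ˣ) := by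
      ext u
      simp [mem_rootsOfUnity]
    rw [hKeq, ← Nat.card_coe_set_eq, Nat.card_eq_fintype_card]
    convert hcardroots using 2
    rfl
  have hS' : ({u : (ZMod p)ˣ | u ^ k = -1} : Set (ZMod p)ˣ).ncard = d := by
    have himg : (fun v => u0 * v) '' {u : (ZMod p)ˣ | u ^ d = 1} = {u : (ZMod p)ˣ | u ^ k = -1} := by
      ext w
      constructor
      · rintro ⟨v, hv, rfl⟩
        have hv1 : v ^ k = 1 := (hiff v).mpr hv
        simp only [Set.mem_setOf_eq, mul_pow, hu0k, hv1, mul_one]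
      · intro hw
        refine ⟨u0⁻¹ * w, ?_, by group⟩
        have : (u0⁻¹ * w) ^ k = 1 := by
          rw [mul_pow, inv_pow, hu0k, hw]
          simp
        exact (hiff _).mp this
    rw [← himg, Set.ncard_image_of_injective _ (mul_right_injective u0), hK]
  -- transfer to ZMod p
  have himg2 : (Units.val : (ZMod p)ˣ → ZMod p) '' {u : (ZMod p)ˣ | u ^ k = -1} = {y : ZMod p | y ^ k = -1} := by
    ext y
    constructor
    · rintro ⟨u, hu, rfl⟩
      simpa [← Units.val_pow_eq_pow_val] using congrArg Units.val hu
    · intro hy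
      have hy0 : y ≠ 0 := by
        rintro rfl
        simp only [Set.mem_setOf_eq] at hy
        rw [zero_pow (by omega : k ≠ 0)] at hy
        exact (neg_ne_zero.mpr (one_ne_zero : (1 : ZMod p) ≠ 0)) hy.symm
      have hyu : IsUnit y := isUnit_iff_ne_zero.mpr hy0
      obtain ⟨u, rfl⟩ := hyu
      refine ⟨u, ?_, rfl⟩
      have : ((u ^ k : (ZMod p)ˣ) : ZMod p) = ((-1 : (ZMod p)ˣ) : ZMod p) := by
        simpa [← Units.val_pow_eq_pow_val] using hy
      exact Units.ext this
  rw [← himg2, Set.ncard_image_of_injective _ Units.val_injective, hS']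

theorem polynomial_roots_count (p : ℕ) [Fact p.Prime] (hp : p ≠ 2)
    (k : ℕ) (hk : 1 ≤ k) (hkp : Nat.gcd k p = 1)
    (heven : Even ((p - 1) / Nat.gcd k (p - 1)))
    (a b : ℚ_[p]) (ha : a ∈ Ep p) (hb : b ∈ Ep p) (hb1 : b ≠ 1) :
    {x : ℚ_[p] | ‖x‖ ≤ 1 ∧ ‖x ^ k + 1‖ ≤ 1 / (p : ℝ) ∧
      a ^ 2 * x ^ (k + 1) - a ^ 2 * b ^ 2 * x ^ k + b ^ 2 * x - 1 = 0}.ncard =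
      Nat.gcd k (p - 1) := by
  classical
  obtain ⟨ha1, ha2⟩ := ha
  obtain ⟨hb1', hb2⟩ := hb
  have hp3 : 3 ≤ p := by
    have := (Fact.out : p.Prime).two_le
    rcases Nat.lt_or_ge p 3 with h | h
    · interval_cases p <;> simp_all
    · exact h
  haveI : Fact (2 < p) := ⟨by omega⟩
  set A : ℤ_[p] := ⟨a, le_of_eq ha1⟩ with hA
  set B : ℤ_[p] := ⟨b, le_of_eq hb1'⟩ with hB
  have hcoeA : ((A : ℤ_[p]) : ℚ_[p]) = a := rfl
  have hcoeB : ((B : ℤ_[p]) : ℚ_[p]) = b := rfl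
  -- residues of A and B are 1
  have hA1 : PadicInt.toZMod A = 1 := by
    have h0 : PadicInt.toZMod (A - 1) = 0 := by
      rw [padicToZModEqZeroIff]
      show ‖((A - 1 : ℤ_[p]) : ℚ_[p])‖ ≤ 1 / (p : ℝ)
      simpa [PadicInt.coe_sub, hcoeA] using ha2
    rw [map_sub, map_one] at h0
    exact sub_eq_zero.mp h0
  have hB1 : PadicInt.toZMod B = 1 := by
    have h0 : PadicInt.toZMod (B - 1) = 0 := by
      rw [padicToZModEqZeroIff]
      show ‖((B - 1 : ℤ_[p]) : ℚ_[p])‖ ≤ 1 / (p : ℝ)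
      simpa [PadicInt.coe_sub, hcoeB] using hb2
    rw [map_sub, map_one] at h0
    exact sub_eq_zero.mp h0
  -- the polynomial over ℤ_[p]
  set F : Polynomial ℤ_[p] := Polynomial.C (A ^ 2) * Polynomial.X ^ (k + 1)
      - Polynomial.C (A ^ 2 * B ^ 2) * Polynomial.X ^ k
      + Polynomial.C (B ^ 2) * Polynomial.X - 1 with hF
  have hFeval : ∀ z : ℤ_[p],
      F.eval z = A ^ 2 * z ^ (k + 1) - A ^ 2 * B ^ 2 * z ^ k + B ^ 2 * z - 1 := by
    intro z; simp [hF]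
  have hFderiv : ∀ z : ℤ_[p],
      F.derivative.eval z = A ^ 2 * ((k + 1) * z ^ k) - A ^ 2 * B ^ 2 * (k * z ^ (k - 1)) + B ^ 2 := by
    intro z
    simp [hF, Polynomial.derivative_X_pow, Polynomial.derivative_pow]
  have hcoe_eval : ∀ z : ℤ_[p], ((F.eval z : ℤ_[p]) : ℚ_[p]) =
      a ^ 2 * (z : ℚ_[p]) ^ (k + 1) - a ^ 2 * b ^ 2 * (z : ℚ_[p]) ^ k + b ^ 2 * (z : ℚ_[p]) - 1 := by
    intro z
    rw [hFeval z]
    push_cast [PadicInt.coe_sub, PadicInt.coe_add, PadicInt.coe_mul, PadicInt.coe_pow,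
      PadicInt.coe_one, hcoeA, hcoeB]
    ring
  -- p does not divide k
  have hk0 : (k : ZMod p) ≠ 0 := by
    rw [Ne, ZMod.natCast_eq_zero_iff]
    intro hdvd
    have h2 := Nat.dvd_gcd hdvd (dvd_refl p)
    rw [hkp] at h2
    have := Nat.le_of_dvd one_pos h2
    omega
  -- the derivative has norm 1 at points with residue a k-th root of -1
  have hderiv_norm : ∀ z : ℤ_[p], (PadicInt.toZMod z) ^ k = -1 → ‖F.derivative.eval z‖ = 1 := by
    intro z hz
    set y : ZMod p := PadicInt.toZMod z with hy
    have hres : PadicInt.toZMod (F.derivative.eval z)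
        = (k + 1) * y ^ k - (k : ZMod p) * y ^ (k - 1) + 1 := by
      rw [hFderiv z]
      simp [map_sub, map_add, map_mul, map_pow, map_natCast, hA1, hB1, ← hy]
    have hy0 : y ≠ 0 := by
      intro h
      rw [h, zero_pow (by omega : k ≠ 0)] at hz
      exact (neg_ne_zero.mpr (one_ne_zero : (1 : ZMod p) ≠ 0)) hz.symm
    have hyk : y ^ (k - 1) * y = -1 := by
      rw [← pow_succ, (by omega : k - 1 + 1 = k)]
      exact hz
    have hne : (k + 1 : ZMod p) * y ^ k - (k : ZMod p) * y ^ (k - 1) + 1 ≠ 0 := by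
      rw [hz]
      intro habs
      have hw : (k : ZMod p) * (1 + y ^ (k - 1)) = 0 := by linear_combination -habs
      rcases mul_eq_zero.mp hw with h | h
      · exact hk0 h
      · have hw2 : y ^ (k - 1) = -1 := by linear_combination h
        rw [hw2] at hyk
        have hy1 : y = 1 := by linear_combination -hyk
        rw [hy1, one_pow] at hz
        exact ZMod.neg_one_ne_one hz.symm
    have hnz : PadicInt.toZMod (F.derivative.eval z) ≠ 0 := by rw [hres]; exact hne
    have hle := PadicInt.norm_le_one (F.derivative.eval z)
    rcases lt_or_eq_of_le hle with h | h
    · exact absurd ((padicToZModEqZeroIff _).mpr ((padicNormLtOneIffLe _).mp h)) hnz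
    · exact h
  -- correspondence between the norm condition and the residue condition
  have hcond : ∀ (x : ℚ_[p]) (hx : ‖x‖ ≤ 1),
      (‖x ^ k + 1‖ ≤ 1 / (p : ℝ) ↔ (PadicInt.toZMod (⟨x, hx⟩ : ℤ_[p])) ^ k = -1) := by
    intro x hx
    set zx : ℤ_[p] := ⟨x, hx⟩ with hzx
    have hnn : ‖zx ^ k + 1‖ = ‖x ^ k + 1‖ := rfl
    rw [← hnn, ← padicToZModEqZeroIff]
    rw [map_add, map_pow, map_one]
    constructor
    · intro h
      linear_combination h
    · intro h
      rw [h]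
      ring
  have hponeover : (0 : ℝ) < 1 / (p : ℝ) ∧ 1 / (p : ℝ) < 1 := by
    constructor
    · positivity
    · rw [div_lt_one (by positivity)]
      exact_mod_cast (by omega : 1 < p)
  -- the set and target
  set T : Set (ZMod p) := {y | y ^ k = -1} with hT
  set f : ℚ_[p] → ZMod p := fun x => if h : ‖x‖ ≤ 1 then PadicInt.toZMod ⟨x, h⟩ else 0 with hf
  set S : Set ℚ_[p] := {x : ℚ_[p] | ‖x‖ ≤ 1 ∧ ‖x ^ k + 1‖ ≤ 1 / (p : ℝ) ∧
      a ^ 2 * x ^ (k + 1) - a ^ 2 * b ^ 2 * x ^ k + b ^ 2 * x - 1 = 0} with hS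
  have hmaps : Set.MapsTo f S T := by
    rintro x ⟨hx1, hx2, hx3⟩
    rw [hT, Set.mem_setOf_eq, hf]
    simp only [dif_pos hx1]
    exact (hcond x hx1).mp hx2
  have hinj : Set.InjOn f S := by
    rintro x1 ⟨hx11, hx12, hx13⟩ x2 ⟨hx21, hx22, hx23⟩ hf12
    rw [hf] at hf12
    simp only [dif_pos hx11, dif_pos hx21] at hf12
    set z1 : ℤ_[p] := ⟨x1, hx11⟩ with hz1
    set z2 : ℤ_[p] := ⟨x2, hx21⟩ with hz2
    have hroot1 : F.eval z1 = 0 := by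
      apply Subtype.ext
      rw [hcoe_eval z1]
      exact hx13
    have hroot2 : F.eval z2 = 0 := by
      apply Subtype.ext
      rw [hcoe_eval z2]
      exact hx23
    have hdn : ‖F.derivative.eval z1‖ = 1 := hderiv_norm z1 ((hcond x1 hx11).mp hx12)
    have hnorm : ‖F.eval z1‖ < ‖F.derivative.eval z1‖ ^ 2 := by
      rw [hroot1, hdn, norm_zero]
      norm_num
    obtain ⟨z, hzroot, hzclose, hzderiv, hzuniq⟩ := hensels_lemma hnorm
    simp only [Polynomial.coe_aeval_eq_eval] at hzroot hzclose hzderiv hzuniq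
    have h1 : z1 = z := hzuniq z1 hroot1 (by rw [sub_self, norm_zero, hdn]; norm_num)
    have hdiff : ‖z2 - z1‖ ≤ 1 / (p : ℝ) := by
      rw [← padicToZModEqZeroIff, map_sub, hf12, sub_self]
    have h2 : z2 = z := hzuniq z2 hroot2 (by rw [hdn]; exact lt_of_le_of_lt hdiff hponeover.2)
    have : z1 = z2 := h1.trans h2.symm
    exact congrArg Subtype.val this
  have hsurj : Set.SurjOn f S T := by
    rintro y hy
    rw [hT, Set.mem_setOf_eq] at hy
    set z0 : ℤ_[p] := ((y.val : ℕ) : ℤ_[p]) with hz0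
    have hres0 : PadicInt.toZMod z0 = y := by
      rw [hz0, map_natCast]
      exact ZMod.natCast_rightInverse y
    have hFz0res : PadicInt.toZMod (F.eval z0) = 0 := by
      rw [hFeval z0]
      simp only [map_sub, map_add, map_mul, map_pow, map_one, hA1, hB1, hres0]
      linear_combination (y - 1) * hy
    have hFz0 : ‖F.eval z0‖ ≤ 1 / (p : ℝ) := (padicToZModEqZeroIff _).mp hFz0res
    have hdn0 : ‖F.derivative.eval z0‖ = 1 := hderiv_norm z0 (by rw [hres0]; exact hy)
    have hnorm : ‖F.eval z0‖ < ‖F.derivative.eval z0‖ ^ 2 := by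
      rw [hdn0]
      norm_num
      exact lt_of_le_of_lt hFz0 hponeover.2
    obtain ⟨z, hzroot, hzclose, hzderiv, hzuniq⟩ := hensels_lemma hnorm
    simp only [Polynomial.coe_aeval_eq_eval] at hzroot hzclose hzderiv hzuniq
    have hresz : PadicInt.toZMod z = y := by
      have hd : ‖z - z0‖ ≤ 1 / (p : ℝ) := by
        rw [← padicNormLtOneIffLe]
        rw [hdn0] at hzclose
        exact hzclose
      have := (padicToZModEqZeroIff _).mpr hd
      rw [map_sub, hres0] at this
      linear_combination this
    refine ⟨(z : ℚ_[p]), ?_, ?_⟩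
    · refine ⟨z.2, ?_, ?_⟩
      · have hzz : (⟨(z : ℚ_[p]), z.2⟩ : ℤ_[p]) = z := rfl
        rw [hcond (z : ℚ_[p]) z.2, hzz, hresz]
        exact hy
      · rw [← hcoe_eval z, hzroot]
        rfl
    · rw [hf]
      simp only [dif_pos z.2]
      have hzz : (⟨(z : ℚ_[p]), z.2⟩ : ℤ_[p]) = z := rfl
      rw [hzz, hresz]
  have himage : f '' S = T := Set.BijOn.image_eq ⟨hmaps, hinj, hsurj⟩
  calc S.ncard = (f '' S).ncard := (Set.ncard_image_of_injOn hinj).symm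
    _ = T.ncard := by rw [himage]
    _ = Nat.gcd k (p - 1) := count_neg_one p hp k hk heven
end

section
/- Let p be an odd prime, k ≥ 1, and a, b ∈ E_p with b ≠ 1, where E_p = {x ∈ Q_p : |x|_p = 1, |x−1|_p ≤ 1/p}. Suppose (u₁, u₂, u₃) ∈ Q_p³ satisfies the system u₁ = a²((b²u₃+1)/(u₃+b²))^k, u₂ = a²((b²u₂+1)u₃/((u₃+b²)u₁))^k, u₃ = a²((b²u₃+1)u₁/((u₂+b²)u₃))^k (with all denominators nonzero). Then |u₂|_p = 1 and |u₃|_p = 1. -/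
private lemma pow_eq_one_aux {x : ℝ} {k : ℕ} (hk : k ≠ 0) (hx : 0 ≤ x) (h : x ^ k = 1) :
    x = 1 := by
  rcases lt_trichotomy x 1 with h1|h1|h1
  · have := pow_lt_one₀ hx h1 hk; linarith
  · exact h1
  · have := one_lt_pow₀ h1 hk; linarith

private lemma pow_cancel_aux {x y : ℝ} {k : ℕ} (hk : k ≠ 0) (hx : 0 ≤ x) (hy : 0 ≤ y)
    (h : x ^ k = y ^ k) : x = y := by
  rcases lt_trichotomy x y with h1|h1|h1
  · have := pow_lt_pow_left₀ h1 hx hk; linarith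
  · exact h1
  · have := pow_lt_pow_left₀ h1 hy hk; linarith

private lemma padic_dom {p : ℕ} [Fact p.Prime] {x y : ℚ_[p]} (h : ‖y‖ < ‖x‖) :
    ‖x + y‖ = ‖x‖ := by
  rw [Padic.add_eq_max_of_ne (ne_of_gt h), max_eq_left h.le]

private lemma padic_dom' {p : ℕ} [Fact p.Prime] {x y : ℚ_[p]} (h : ‖y‖ < ‖x‖) :
    ‖y + x‖ = ‖x‖ := by rw [add_comm]; exact padic_dom h

set_option maxHeartbeats 1000000 in
theorem solution_norms (p : ℕ) [Fact p.Prime] (hp : p ≠ 2)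
    (k : ℕ) (hk : 1 ≤ k) (a b : ℚ_[p]) (ha : a ∈ Ep p) (hb : b ∈ Ep p)
    (hb1 : b ≠ 1) (u₁ u₂ u₃ : ℚ_[p])
    (hd1 : u₃ + b ^ 2 ≠ 0) (hd2 : u₁ ≠ 0) (hd3 : u₂ + b ^ 2 ≠ 0) (hd4 : u₃ ≠ 0)
    (h1 : u₁ = a ^ 2 * ((b ^ 2 * u₃ + 1) / (u₃ + b ^ 2)) ^ k)
    (h2 : u₂ = a ^ 2 * ((b ^ 2 * u₂ + 1) * u₃ / ((u₃ + b ^ 2) * u₁)) ^ k)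
    (h3 : u₃ = a ^ 2 * ((b ^ 2 * u₃ + 1) * u₁ / ((u₂ + b ^ 2) * u₃)) ^ k) :
    ‖u₂‖ = 1 ∧ ‖u₃‖ = 1 := by
  have hk0 : k ≠ 0 := Nat.one_le_iff_ne_zero.mp hk
  have hpodd : ¬ ((p : ℤ) ∣ 2) := by
    intro h
    have h' : p ∣ 2 := by exact_mod_cast h
    exact hp ((Nat.prime_dvd_prime_iff_eq Fact.out Nat.prime_two).mp h')
  have hanorm : ‖a‖ = 1 := ha.1
  have hbnorm : ‖b‖ = 1 := hb.1
  have hb2 : ‖b ^ 2‖ = 1 := by rw [norm_pow, hbnorm, one_pow]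
  have hp1 : (1 : ℝ) < p := by exact_mod_cast (Fact.out : p.Prime).one_lt
  have hinvp : 1 / (p : ℝ) < 1 := by
    rw [div_lt_one (by linarith)]; linarith
  have h2norm : ‖(2 : ℚ_[p])‖ = 1 := by
    have hle : ‖((2 : ℤ) : ℚ_[p])‖ ≤ 1 := Padic.norm_int_le_one 2
    have hlt : ¬ ‖((2 : ℤ) : ℚ_[p])‖ < 1 := by
      rw [Padic.norm_intCast_lt_one_iff]; exact hpodd
    push_cast at hle hlt
    linarith
  -- norms of b+1, b^2+1, 1-b^4
  have hbm1 : ‖b - 1‖ < 1 := lt_of_le_of_lt hb.2 hinvp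
  have hbp1 : ‖b + 1‖ = 1 := by
    have : b + 1 = 2 + (b - 1) := by ring
    rw [this, padic_dom (by rw [h2norm]; exact hbm1), h2norm]
  have hb2m1 : ‖b ^ 2 - 1‖ < 1 := by
    have : b ^ 2 - 1 = (b - 1) * (b + 1) := by ring
    rw [this, norm_mul, hbp1, mul_one]; exact hbm1
  have hb2p1 : ‖b ^ 2 + 1‖ = 1 := by
    have : b ^ 2 + 1 = 2 + (b ^ 2 - 1) := by ring
    rw [this, padic_dom (by rw [h2norm]; exact hb2m1), h2norm]
  have hb4 : ‖1 - b ^ 4‖ < 1 := by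
    have : 1 - b ^ 4 = -((b ^ 2 - 1) * (b ^ 2 + 1)) := by ring
    rw [this, norm_neg, norm_mul, hb2p1, mul_one]; exact hb2m1
  -- key sub-lemma
  have key : ∀ u : ℚ_[p], ‖u + b ^ 2‖ < 1 → ‖b ^ 2 * u + 1‖ < 1 := by
    intro u hu
    have heq : b ^ 2 * u + 1 = b ^ 2 * (u + b ^ 2) + (1 - b ^ 4) := by ring
    rw [heq]
    refine lt_of_le_of_lt (Padic.nonarchimedean _ _) ?_
    rw [max_lt_iff]
    constructor
    · rw [norm_mul, hb2, one_mul]; exact hu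
    · exact hb4
  -- positivity
  have hD1 : (0 : ℝ) < ‖u₃ + b ^ 2‖ := norm_pos_iff.mpr hd1
  have hD2 : (0 : ℝ) < ‖u₂ + b ^ 2‖ := norm_pos_iff.mpr hd3
  have hT : (0 : ℝ) < ‖u₃‖ := norm_pos_iff.mpr hd4
  have hR : (0 : ℝ) < ‖u₁‖ := norm_pos_iff.mpr hd2
  have hA1ne : b ^ 2 * u₃ + 1 ≠ 0 := by
    intro h
    apply hd2
    rw [h1, h, zero_div, zero_pow hk0, mul_zero]
  have hA1 : (0 : ℝ) < ‖b ^ 2 * u₃ + 1‖ := norm_pos_iff.mpr hA1ne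
  have hbu3 : ‖b ^ 2 * u₃‖ = ‖u₃‖ := by rw [norm_mul, hb2, one_mul]
  have hbu2 : ‖b ^ 2 * u₂‖ = ‖u₂‖ := by rw [norm_mul, hb2, one_mul]
  have ha2 : ‖a ^ 2‖ = 1 := by rw [norm_pow, hanorm, one_pow]
  -- norm equations
  have e1 : ‖u₁‖ = (‖b ^ 2 * u₃ + 1‖ / ‖u₃ + b ^ 2‖) ^ k := by
    rw [h1, norm_mul, ha2, one_mul, norm_pow, norm_div]
  have e2 : ‖u₂‖ = (‖b ^ 2 * u₂ + 1‖ * ‖u₃‖ / (‖u₃ + b ^ 2‖ * ‖u₁‖)) ^ k := by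
    conv_lhs => rw [h2]
    rw [norm_mul, ha2, one_mul, norm_pow, norm_div, norm_mul, norm_mul]
  have e3 : ‖u₃‖ = (‖b ^ 2 * u₃ + 1‖ * ‖u₁‖ / (‖u₂ + b ^ 2‖ * ‖u₃‖)) ^ k := by
    conv_lhs => rw [h3]
    rw [norm_mul, ha2, one_mul, norm_pow, norm_div, norm_mul, norm_mul]
  -- product forms
  have E1 : ‖u₁‖ * ‖u₃ + b ^ 2‖ ^ k = ‖b ^ 2 * u₃ + 1‖ ^ k := by
    rw [div_pow] at e1
    field_simp at e1
    linarith [e1]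
  have E2 : ‖u₂‖ * (‖u₃ + b ^ 2‖ ^ k * ‖u₁‖ ^ k) = ‖b ^ 2 * u₂ + 1‖ ^ k * ‖u₃‖ ^ k := by
    rw [div_pow, mul_pow, mul_pow] at e2
    field_simp at e2
    linarith [e2]
  have E3 : ‖u₃‖ * (‖u₂ + b ^ 2‖ ^ k * ‖u₃‖ ^ k) = ‖b ^ 2 * u₃ + 1‖ ^ k * ‖u₁‖ ^ k := by
    rw [div_pow, mul_pow, mul_pow] at e3
    field_simp at e3
    linarith [e3]
  clear e1 e2 e3 h1 h2 h3
  rcases lt_trichotomy ‖u₃‖ 1 with hT1 | hT1 | hT1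
  · -- case ‖u₃‖ < 1 : contradiction
    exfalso
    have hA1v : ‖b ^ 2 * u₃ + 1‖ = 1 := by
      have := padic_dom' (x := (1 : ℚ_[p])) (y := b ^ 2 * u₃)
        (by rw [norm_one, hbu3]; exact hT1)
      rwa [norm_one] at this
    have hD1v : ‖u₃ + b ^ 2‖ = 1 := by
      have := padic_dom' (x := b ^ 2) (y := u₃) (by rw [hb2]; exact hT1)
      rwa [hb2] at this
    rw [hD1v, hA1v, one_pow, mul_one] at E1
    rw [hA1v, E1, one_pow, one_mul] at E3
    rw [hD1v, E1, one_pow, one_mul, mul_one] at E2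
    -- E2 : ‖u₂‖ = ‖b^2*u₂+1‖^k * ‖u₃‖^k ; E3 : ‖u₃‖ * (‖u₂+b^2‖^k * ‖u₃‖^k) = 1
    have hDT : 1 < ‖u₂ + b ^ 2‖ * ‖u₃‖ := by
      by_contra hle
      push_neg at hle
      have hpow : (‖u₂ + b ^ 2‖ * ‖u₃‖) ^ k ≤ 1 := pow_le_one₀ (by positivity) hle
      rw [mul_pow] at hpow
      nlinarith [E3, hT1, hT, pow_pos hD2 k, pow_pos hT k]
    have hD2v : 1 < ‖u₂ + b ^ 2‖ := by
      have := mul_lt_of_lt_one_right hD2 hT1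
      linarith
    have hS : ‖u₂‖ = ‖u₂ + b ^ 2‖ := by
      have h' := padic_dom (x := u₂ + b ^ 2) (y := -b ^ 2)
        (by rw [norm_neg, hb2]; exact hD2v)
      rw [show u₂ + b ^ 2 + -b ^ 2 = u₂ from by ring] at h'
      exact h'
    have hS1 : 1 < ‖u₂‖ := hS ▸ hD2v
    have hA2v : ‖b ^ 2 * u₂ + 1‖ = ‖u₂‖ := by
      have := padic_dom (x := b ^ 2 * u₂) (y := 1)
        (by rw [norm_one, hbu2]; exact hS1)
      rwa [hbu2] at this
    rw [hA2v] at E2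
    rw [← hS] at E3
    -- E2 : ‖u₂‖ = ‖u₂‖^k * ‖u₃‖^k ; E3 : ‖u₃‖ * (‖u₂‖^k * ‖u₃‖^k) = 1
    have hTS : ‖u₃‖ * ‖u₂‖ = 1 := by
      calc ‖u₃‖ * ‖u₂‖ = ‖u₃‖ * (‖u₂‖ ^ k * ‖u₃‖ ^ k) := by rw [← E2]
        _ = 1 := E3
    have hSTpow : (‖u₂‖ * ‖u₃‖) ^ k = 1 := by
      rw [mul_comm, hTS, one_pow]
    rw [← mul_pow] at E2
    rw [hSTpow] at E2
    linarith
  · -- case ‖u₃‖ = 1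
    have hA1le : ‖b ^ 2 * u₃ + 1‖ ≤ 1 := by
      refine le_trans (Padic.nonarchimedean _ _) ?_
      rw [hbu3, norm_one, hT1]; simp
    have hD1le : ‖u₃ + b ^ 2‖ ≤ 1 := by
      refine le_trans (Padic.nonarchimedean _ _) ?_
      rw [hb2, hT1]; simp
    rcases lt_trichotomy ‖u₂‖ 1 with hS1 | hS1 | hS1
    · -- ‖u₂‖ < 1 : contradiction
      exfalso
      have hA2v : ‖b ^ 2 * u₂ + 1‖ = 1 := by
        have := padic_dom' (x := (1 : ℚ_[p])) (y := b ^ 2 * u₂)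
          (by rw [norm_one, hbu2]; exact hS1)
        rwa [norm_one] at this
      have hD2v : ‖u₂ + b ^ 2‖ = 1 := by
        have := padic_dom' (x := b ^ 2) (y := u₂) (by rw [hb2]; exact hS1)
        rwa [hb2] at this
      rw [hT1, hD2v, one_pow, one_mul, mul_one] at E3
      rw [← mul_pow] at E3
      have hAR : ‖b ^ 2 * u₃ + 1‖ * ‖u₁‖ = 1 := pow_eq_one_aux hk0 (by positivity) E3.symm
      have hRge : 1 ≤ ‖u₁‖ := by nlinarith
      rw [hA2v, hT1, one_pow, mul_one] at E2
      -- E2 : ‖u₂‖ * (‖u₃+b^2‖^k * ‖u₁‖^k) = 1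
      have hE1' : ‖u₁‖ * (‖u₃ + b ^ 2‖ ^ k * ‖u₁‖ ^ k) = 1 := by
        calc ‖u₁‖ * (‖u₃ + b ^ 2‖ ^ k * ‖u₁‖ ^ k)
            = (‖u₁‖ * ‖u₃ + b ^ 2‖ ^ k) * ‖u₁‖ ^ k := by ring
          _ = ‖b ^ 2 * u₃ + 1‖ ^ k * ‖u₁‖ ^ k := by rw [E1]
          _ = (‖b ^ 2 * u₃ + 1‖ * ‖u₁‖) ^ k := (mul_pow _ _ _).symm
          _ = 1 := by rw [hAR, one_pow]
      have hX : (0 : ℝ) < ‖u₃ + b ^ 2‖ ^ k * ‖u₁‖ ^ k := by positivity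
      have hSR : ‖u₂‖ = ‖u₁‖ := mul_right_cancel₀ hX.ne' (E2.trans hE1'.symm)
      linarith
    · exact ⟨hS1, hT1⟩
    · -- ‖u₂‖ > 1 : contradiction
      exfalso
      have hA2v : ‖b ^ 2 * u₂ + 1‖ = ‖u₂‖ := by
        have := padic_dom (x := b ^ 2 * u₂) (y := 1)
          (by rw [norm_one, hbu2]; exact hS1)
        rwa [hbu2] at this
      have hD2v : ‖u₂ + b ^ 2‖ = ‖u₂‖ := padic_dom (by rw [hb2]; exact hS1)
      rw [hT1, hD2v, one_pow, one_mul, mul_one] at E3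
      rw [← mul_pow] at E3
      have hSAR : ‖u₂‖ = ‖b ^ 2 * u₃ + 1‖ * ‖u₁‖ :=
        pow_cancel_aux hk0 (norm_nonneg _) (by positivity) E3
      rw [hA2v, hT1, one_pow, mul_one] at E2
      -- E2 : ‖u₂‖ * (‖u₃+b^2‖^k * ‖u₁‖^k) = ‖u₂‖^k
      have hSk : ‖u₂‖ ^ k = ‖b ^ 2 * u₃ + 1‖ ^ k * ‖u₁‖ ^ k := by
        rw [hSAR, mul_pow]
      have hRk : (0 : ℝ) < ‖u₁‖ ^ k := pow_pos hR k
      have hcan : ‖u₂‖ * ‖u₃ + b ^ 2‖ ^ k = ‖b ^ 2 * u₃ + 1‖ ^ k := by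
        have h' : (‖u₂‖ * ‖u₃ + b ^ 2‖ ^ k) * ‖u₁‖ ^ k
            = ‖b ^ 2 * u₃ + 1‖ ^ k * ‖u₁‖ ^ k := by
          rw [← hSk]; rw [← E2]; ring
        exact mul_right_cancel₀ hRk.ne' h'
      have hDk : (0 : ℝ) < ‖u₃ + b ^ 2‖ ^ k := pow_pos hD1 k
      have hSR : ‖u₂‖ = ‖u₁‖ := mul_right_cancel₀ hDk.ne' (hcan.trans E1.symm)
      have hA1one : ‖b ^ 2 * u₃ + 1‖ = 1 := by
        have h' : ‖b ^ 2 * u₃ + 1‖ * ‖u₁‖ = 1 * ‖u₁‖ := by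
          rw [← hSAR, hSR, one_mul]
        exact mul_right_cancel₀ hR.ne' h'
      have hD1lt : ‖u₃ + b ^ 2‖ < 1 := by
        by_contra hge
        push_neg at hge
        have : (1 : ℝ) ≤ ‖u₃ + b ^ 2‖ ^ k := one_le_pow₀ hge
        have hR1 : 1 < ‖u₁‖ := by rw [← hSR]; exact hS1
        rw [hA1one, one_pow] at E1
        nlinarith
      have := key u₃ hD1lt
      linarith
  · -- case 1 < ‖u₃‖ : contradiction
    exfalso
    have hA1v : ‖b ^ 2 * u₃ + 1‖ = ‖u₃‖ := by
      have := padic_dom (x := b ^ 2 * u₃) (y := 1)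
        (by rw [norm_one, hbu3]; exact hT1)
      rwa [hbu3] at this
    have hD1v : ‖u₃ + b ^ 2‖ = ‖u₃‖ := padic_dom (by rw [hb2]; exact hT1)
    have hTk : (0 : ℝ) < ‖u₃‖ ^ k := pow_pos hT k
    rw [hD1v, hA1v] at E1
    have hRv : ‖u₁‖ = 1 := by
      have h' : ‖u₁‖ * ‖u₃‖ ^ k = 1 * ‖u₃‖ ^ k := by rw [one_mul]; exact E1
      exact mul_right_cancel₀ hTk.ne' h'
    rw [hA1v, hRv, one_pow, mul_one] at E3
    have hTD2 : ‖u₃‖ * ‖u₂ + b ^ 2‖ ^ k = 1 := by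
      have h' : (‖u₃‖ * ‖u₂ + b ^ 2‖ ^ k) * ‖u₃‖ ^ k = 1 * ‖u₃‖ ^ k := by
        rw [one_mul]
        calc (‖u₃‖ * ‖u₂ + b ^ 2‖ ^ k) * ‖u₃‖ ^ k
            = ‖u₃‖ * (‖u₂ + b ^ 2‖ ^ k * ‖u₃‖ ^ k) := by ring
          _ = ‖u₃‖ ^ k := E3
      exact mul_right_cancel₀ hTk.ne' h'
    have hD2lt : ‖u₂ + b ^ 2‖ < 1 := by
      by_contra hge
      push_neg at hge
      have : (1 : ℝ) ≤ ‖u₂ + b ^ 2‖ ^ k := one_le_pow₀ hge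
      nlinarith
    have hSv : ‖u₂‖ = 1 := by
      have h' := padic_dom (x := -b ^ 2) (y := u₂ + b ^ 2)
        (by rw [norm_neg, hb2]; exact hD2lt)
      rw [show -b ^ 2 + (u₂ + b ^ 2) = u₂ from by ring, norm_neg, hb2] at h'
      exact h'
    have hA2lt : ‖b ^ 2 * u₂ + 1‖ < 1 := key u₂ hD2lt
    rw [hD1v, hRv, one_pow, mul_one, hSv, one_mul] at E2
    -- E2 : ‖u₃‖^k = ‖b^2*u₂+1‖^k * ‖u₃‖^k
    have hA2k : ‖b ^ 2 * u₂ + 1‖ ^ k = 1 := by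
      have h' : ‖b ^ 2 * u₂ + 1‖ ^ k * ‖u₃‖ ^ k = 1 * ‖u₃‖ ^ k := by
        rw [one_mul, ← E2]
      exact mul_right_cancel₀ hTk.ne' h'
    have : ‖b ^ 2 * u₂ + 1‖ ^ k < 1 := pow_lt_one₀ (norm_nonneg _) hA2lt hk0
    linarith
end

section
/- Let p be a prime with p ≡ 1 (mod 4) and a, b ∈ E_p with b ≠ 1, where E_p = {x ∈ Q_p : |x|_p = 1, |x−1|_p ≤ 1/p}. Then the quadratic equation b²(a²b²+1)x² + a(b⁴−1)x + b²(b²+a²) = 0 has two (distinct) solutions in Q_p. -/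
private lemma dvd_iff_toZMod_eq_zero {p : ℕ} [Fact p.Prime] (x : ℤ_[p]) :
    (p : ℤ_[p]) ∣ x ↔ PadicInt.toZMod x = 0 := by
  rw [← Ideal.mem_span_singleton, ← PadicInt.maximalIdeal_eq_span_p,
    ← PadicInt.ker_toZMod, RingHom.mem_ker]

set_option maxHeartbeats 1000000 in
theorem quadratic_two_solutions (p : ℕ) [Fact p.Prime] (hp : p % 4 = 1)
    (a b : ℚ_[p]) (ha : a ∈ Ep p) (hb : b ∈ Ep p) (hb1 : b ≠ 1) :
    ∃ x y : ℚ_[p], x ≠ y ∧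
      b ^ 2 * (a ^ 2 * b ^ 2 + 1) * x ^ 2 + a * (b ^ 4 - 1) * x +
        b ^ 2 * (b ^ 2 + a ^ 2) = 0 ∧
      b ^ 2 * (a ^ 2 * b ^ 2 + 1) * y ^ 2 + a * (b ^ 4 - 1) * y +
        b ^ 2 * (b ^ 2 + a ^ 2) = 0 := by
  have hprime := (Fact.out : p.Prime)
  have hp2 : p ≠ 2 := by omega
  -- basic facts in ZMod p
  have h2Z : (2 : ZMod p) ≠ 0 := by
    intro h
    have : ((2 : ℕ) : ZMod p) = 0 := by exact_mod_cast h
    rw [ZMod.natCast_eq_zero_iff] at this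
    have := (Nat.prime_dvd_prime_iff_eq hprime Nat.prime_two).mp this
    exact hp2 this
  -- lift a and b to ℤ_[p]
  set A : ℤ_[p] := ⟨a, le_of_eq ha.1⟩ with hAdef
  set B : ℤ_[p] := ⟨b, le_of_eq hb.1⟩ with hBdef
  have hApcoe : ((A : ℚ_[p])) = a := rfl
  have hBpcoe : ((B : ℚ_[p])) = b := rfl
  have hdvd_of_norm : ∀ x : ℤ_[p], ‖(x : ℚ_[p])‖ ≤ 1 / (p : ℝ) → (p : ℤ_[p]) ∣ x := by
    intro x hx
    have : ‖x‖ ≤ (p : ℝ) ^ (-(1:ℕ) : ℤ) := by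
      rw [PadicInt.norm_def]
      simpa [zpow_neg, one_div] using hx
    rw [PadicInt.norm_le_pow_iff_mem_span_pow, pow_one, Ideal.mem_span_singleton] at this
    exact this
  have hA1 : (p : ℤ_[p]) ∣ A - 1 := by
    apply hdvd_of_norm
    have : ((A - 1 : ℤ_[p]) : ℚ_[p]) = a - 1 := by push_cast [hApcoe]; ring
    rw [this]; exact ha.2
  have hB1 : (p : ℤ_[p]) ∣ B - 1 := by
    apply hdvd_of_norm
    have : ((B - 1 : ℤ_[p]) : ℚ_[p]) = b - 1 := by push_cast [hBpcoe]; ring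
    rw [this]; exact hb.2
  have hAz : PadicInt.toZMod A = 1 := by
    have := (dvd_iff_toZMod_eq_zero _).mp hA1
    rw [map_sub, map_one, sub_eq_zero] at this
    exact this
  have hBz : PadicInt.toZMod B = 1 := by
    have := (dvd_iff_toZMod_eq_zero _).mp hB1
    rw [map_sub, map_one, sub_eq_zero] at this
    exact this
  -- the discriminant as a p-adic integer
  set D : ℤ_[p] := (A * (B ^ 4 - 1)) ^ 2 -
      4 * (B ^ 2 * (A ^ 2 * B ^ 2 + 1)) * (B ^ 2 * (B ^ 2 + A ^ 2)) with hDdef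
  have hDz : PadicInt.toZMod D = -16 := by
    simp only [hDdef, map_sub, map_mul, map_pow, map_add, map_one, map_ofNat, hAz, hBz]
    ring
  -- square root of -1 mod p
  obtain ⟨s, hs⟩ : IsSquare (-1 : ZMod p) := by
    rw [ZMod.exists_sq_eq_neg_one_iff]; omega
  have hs2 : s * s = -1 := hs.symm
  have hsne : s ≠ 0 := by
    intro h; rw [h, mul_zero] at hs2
    have : (1 : ZMod p) = 0 := by linear_combination hs2
    exact one_ne_zero this
  set t : ℤ_[p] := ((s.val : ℕ) : ℤ_[p]) with htdef
  have htz : PadicInt.toZMod t = s := by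
    rw [htdef, map_natCast, ZMod.natCast_val, ZMod.cast_id]
  -- Hensel's lemma setup
  set a₀ : ℤ_[p] := 4 * t with ha₀def
  set F : Polynomial ℤ_[p] := Polynomial.X ^ 2 - Polynomial.C D with hFdef
  have hFeval : ∀ x : ℤ_[p], F.eval x = x ^ 2 - D := by
    intro x; simp [hFdef]
  have hFderiv : ∀ x : ℤ_[p], F.derivative.eval x = 2 * x := by
    intro x; simp [hFdef, Polynomial.derivative_pow]; try ring
  have heval_dvd : (p : ℤ_[p]) ∣ F.eval a₀ := by
    rw [dvd_iff_toZMod_eq_zero, hFeval]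
    simp only [map_sub, map_pow, map_mul, map_ofNat, htz, hDz, ha₀def]
    linear_combination (16 : ZMod p) * hs2
  have hderiv_norm : ‖F.derivative.eval a₀‖ = 1 := by
    rw [hFderiv]
    refine le_antisymm (PadicInt.norm_le_one _) (not_lt.mp ?_)
    rw [PadicInt.norm_lt_one_iff_dvd, dvd_iff_toZMod_eq_zero]
    simp only [map_mul, map_ofNat, htz, ha₀def]
    intro h
    have h8 : (8 : ZMod p) ≠ 0 := by
      intro h8
      have : ((8 : ℕ) : ZMod p) = 0 := by exact_mod_cast h8
      rw [ZMod.natCast_eq_zero_iff] at this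
      have := hprime.dvd_of_dvd_pow (show p ∣ 2 ^ 3 by norm_num at this ⊢; exact this)
      exact hp2 ((Nat.prime_dvd_prime_iff_eq hprime Nat.prime_two).mp this)
    have : (8 : ZMod p) * s = 0 := by linear_combination h
    rcases mul_eq_zero.mp this with h' | h'
    · exact h8 h'
    · exact hsne h'
  have hnorm : ‖F.eval a₀‖ < ‖F.derivative.eval a₀‖ ^ 2 := by
    rw [hderiv_norm, one_pow]
    rw [← PadicInt.norm_lt_one_iff_dvd] at heval_dvd
    exact heval_dvd
  obtain ⟨z, hz0, hzdist, -, -⟩ := hensels_lemma hnorm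
  have hz2 : z ^ 2 = D := by
    rw [Polynomial.coe_aeval_eq_eval, hFeval] at hz0; exact sub_eq_zero.mp hz0
  have hzz : PadicInt.toZMod z = PadicInt.toZMod a₀ := by
    rw [Polynomial.coe_aeval_eq_eval, hderiv_norm] at hzdist
    rw [PadicInt.norm_lt_one_iff_dvd, dvd_iff_toZMod_eq_zero, map_sub, sub_eq_zero] at hzdist
    exact hzdist
  have hzne : z ≠ 0 := by
    intro h
    rw [h, map_zero] at hzz
    have : (4 : ZMod p) * s = 0 := by
      rw [ha₀def, map_mul, map_ofNat, htz] at hzz; exact hzz.symm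
    rcases mul_eq_zero.mp this with h' | h'
    · have : ((4 : ℕ) : ZMod p) = 0 := by exact_mod_cast h'
      rw [ZMod.natCast_eq_zero_iff] at this
      have := hprime.dvd_of_dvd_pow (show p ∣ 2 ^ 2 by norm_num at this ⊢; exact this)
      exact hp2 ((Nat.prime_dvd_prime_iff_eq hprime Nat.prime_two).mp this)
    · exact hsne h'
  -- transfer to ℚ_[p]
  set A' : ℚ_[p] := b ^ 2 * (a ^ 2 * b ^ 2 + 1) with hA'def
  set B' : ℚ_[p] := a * (b ^ 4 - 1) with hB'def
  set C' : ℚ_[p] := b ^ 2 * (b ^ 2 + a ^ 2) with hC'def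
  have hA'ne : A' ≠ 0 := by
    have h1 : (B ^ 2 * (A ^ 2 * B ^ 2 + 1) : ℤ_[p]) ≠ 0 := by
      intro h
      have : PadicInt.toZMod (B ^ 2 * (A ^ 2 * B ^ 2 + 1)) = 0 := by rw [h, map_zero]
      simp only [map_mul, map_pow, map_add, map_one, hAz, hBz] at this
      norm_num at this
      exact h2Z this
    intro h
    apply h1
    have : ((B ^ 2 * (A ^ 2 * B ^ 2 + 1) : ℤ_[p]) : ℚ_[p]) = A' := by
      push_cast [hApcoe, hBpcoe, hA'def]; ring
    exact PadicInt.coe_eq_zero.mp (this.trans h)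
  have hdisc : discrim A' B' C' = (z : ℚ_[p]) * (z : ℚ_[p]) := by
    have : ((D : ℤ_[p]) : ℚ_[p]) = ((z : ℤ_[p]) : ℚ_[p]) * z := by
      rw [← hz2]; push_cast; ring
    rw [discrim, hA'def, hB'def, hC'def, ← this, hDdef]
    have h4 : ((4 : ℤ_[p]) : ℚ_[p]) = 4 := by
      rw [show (4 : ℤ_[p]) = ((4 : ℕ) : ℤ_[p]) by norm_num, PadicInt.coe_natCast]; norm_num
    push_cast [hApcoe, hBpcoe, h4]; ring
  have hzne' : (z : ℚ_[p]) ≠ 0 := PadicInt.coe_ne_zero.mpr hzne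
  refine ⟨(-B' + z) / (2 * A'), (-B' - z) / (2 * A'), ?_, ?_, ?_⟩
  · intro h
    have h2A' : (2 * A') ≠ 0 := by
      simp [hA'ne]
    have h' := congrArg (· * (2 * A')) h
    simp only [div_mul_cancel₀ _ h2A'] at h'
    apply hzne'
    linear_combination h' / 2
  · have := (quadratic_eq_zero_iff hA'ne hdisc ((-B' + z) / (2 * A'))).mpr (Or.inl rfl)
    linear_combination this
  · have := (quadratic_eq_zero_iff hA'ne hdisc ((-B' - z) / (2 * A'))).mpr (Or.inr rfl)
    linear_combination this
end

section
/- Let p be an odd prime, k ≥ 1, and a, b ∈ E_p with b ≠ 1. Consider the polynomial map G : Q_p³ → Q_p³ given by G₁(u) = u₁(u₃+b²)^k − a²(b²u₃+1)^k, G₂(u) = u₁^k u₂ (u₃+b²)^k − a²(b²u₂+1)^k u₃^k, G₃(u) = (u₂+b²)^k u₃^{k+1} − a² u₁^k (b²u₃+1)^k. Then G has exactly one zero u* in E_p × E_p × E_p, and u* ≡ (1,1,1) (mod p). -/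
set_option maxRecDepth 100000
set_option maxHeartbeats 1000000

namespace GUZ

open PadicInt Finset

variable {p : ℕ} [Fact p.Prime]

lemma toZMod_eq_zero_iff (x : ℤ_[p]) : toZMod x = 0 ↔ ‖x‖ < 1 := by
  rw [← RingHom.mem_ker, ker_toZMod, IsLocalRing.mem_maximalIdeal, mem_nonunits]

lemma toZMod_eq_one {x : ℤ_[p]} (h : ‖x - 1‖ < 1) : toZMod x = 1 := by
  have h0 : toZMod (x - 1) = 0 := (toZMod_eq_zero_iff _).2 h
  rw [map_sub, map_one, sub_eq_zero] at h0
  exact h0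

lemma norm_eq_one_of {x : ℤ_[p]} (h : ‖x - 1‖ < 1) : ‖x‖ = 1 := by
  refine le_antisymm x.norm_le_one ?_
  by_contra hlt
  push_neg at hlt
  have h1 : toZMod x = 0 := (toZMod_eq_zero_iff _).2 hlt
  rw [toZMod_eq_one h] at h1
  exact one_ne_zero h1

lemma norm_lt_one_iff_le (x : ℤ_[p]) : ‖x‖ < 1 ↔ ‖x‖ ≤ 1 / (p : ℝ) := by
  have := PadicInt.norm_le_pow_iff_norm_lt_pow_add_one x (-1)
  rw [show (-1 : ℤ) + 1 = 0 by ring, zpow_zero] at this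
  rw [← this, zpow_neg_one, one_div]

/-- difference quotient for `x^k - y^k`. -/
noncomputable def D (k : ℕ) (x y : ℤ_[p]) : ℤ_[p] := ∑ i ∈ range k, x ^ i * y ^ (k - 1 - i)

lemma D_mul (k : ℕ) (x y : ℤ_[p]) : D k x y * (x - y) = x ^ k - y ^ k :=
  geom_sum₂_mul x y k

lemma toZMod_D (k : ℕ) {x y : ℤ_[p]} {c : ZMod p} (hx : toZMod x = c) (hy : toZMod y = c) :
    toZMod (D k x y) = (k : ZMod p) * c ^ (k - 1) := by
  unfold D
  rw [map_sum]
  rw [Finset.sum_congr rfl (fun i hi => ?_), Finset.sum_const, card_range, nsmul_eq_mul]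
  rw [map_mul, map_pow, map_pow, hx, hy, ← pow_add]
  congr 1
  simp only [mem_range] at hi
  omega

lemma two_ne_zero' (hp : p ≠ 2) : (2 : ZMod p) ≠ 0 := by
  have hprime : p.Prime := Fact.out
  intro h
  have h2 : ((2 : ℕ) : ZMod p) = 0 := by exact_mod_cast h
  rw [ZMod.natCast_eq_zero_iff] at h2
  exact hp ((Nat.prime_dvd_prime_iff_eq hprime Nat.prime_two).mp h2)

lemma cramer {R : Type*} [CommRing R] (c11 c13 c21 c22 c23 c31 c32 c33 d1 d2 d3 : R)
    (r1 : c11 * d1 + c13 * d3 = 0)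
    (r2 : c21 * d1 + c22 * d2 + c23 * d3 = 0)
    (r3 : c31 * d1 + c32 * d2 + c33 * d3 = 0) :
    (c11 * (c22*c33 - c23*c32) + c13 * (c21*c32 - c22*c31)) * d1 = 0 ∧
    (c11 * (c22*c33 - c23*c32) + c13 * (c21*c32 - c22*c31)) * d2 = 0 ∧
    (c11 * (c22*c33 - c23*c32) + c13 * (c21*c32 - c22*c31)) * d3 = 0 := by
  refine ⟨?_, ?_, ?_⟩
  · linear_combination (c22*c33 - c23*c32) * r1 + (c13*c32) * r2 + (-(c13*c22)) * r3
  · linear_combination (-(c21*c33 - c23*c31)) * r1 + (c11*c33 - c13*c31) * r2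
      + (-(c11*c23 - c13*c21)) * r3
  · linear_combination (c21*c32 - c22*c31) * r1 + (-(c11*c32)) * r2 + (c11*c22) * r3

/-- Uniqueness over `ℤ_[p]`. -/
lemma uniq (hp : p ≠ 2) (k : ℕ) (hk : 1 ≤ k) (α β : ℤ_[p])
    (hα : toZMod α = 1) (hβ : toZMod β = 1)
    (u1 u2 u3 v1 v2 v3 : ℤ_[p])
    (hu1 : toZMod u1 = 1) (hu2 : toZMod u2 = 1) (hu3 : toZMod u3 = 1)
    (hv1 : toZMod v1 = 1) (hv2 : toZMod v2 = 1) (hv3 : toZMod v3 = 1)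
    (e1 : u1 * (u3 + β) ^ k - α * (β * u3 + 1) ^ k = 0)
    (e2 : u1 ^ k * u2 * (u3 + β) ^ k - α * (β * u2 + 1) ^ k * u3 ^ k = 0)
    (e3 : (u2 + β) ^ k * u3 ^ (k + 1) - α * u1 ^ k * (β * u3 + 1) ^ k = 0)
    (f1 : v1 * (v3 + β) ^ k - α * (β * v3 + 1) ^ k = 0)
    (f2 : v1 ^ k * v2 * (v3 + β) ^ k - α * (β * v2 + 1) ^ k * v3 ^ k = 0)
    (f3 : (v2 + β) ^ k * v3 ^ (k + 1) - α * v1 ^ k * (β * v3 + 1) ^ k = 0) :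
    u1 = v1 ∧ u2 = v2 ∧ u3 = v3 := by
  obtain ⟨m, rfl⟩ : ∃ m, k = m + 1 := ⟨k - 1, by omega⟩
  have hDS3 : D (m+1) (u3+β) (v3+β) * (u3 - v3) = (u3+β)^(m+1) - (v3+β)^(m+1) := by
    linear_combination D_mul (m+1) (u3+β) (v3+β)
  have hDQ3 : D (m+1) (β*u3+1) (β*v3+1) * (u3 - v3) * β
      = (β*u3+1)^(m+1) - (β*v3+1)^(m+1) := by
    linear_combination D_mul (m+1) (β*u3+1) (β*v3+1)
  have hDS2 : D (m+1) (u2+β) (v2+β) * (u2 - v2) = (u2+β)^(m+1) - (v2+β)^(m+1) := by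
    linear_combination D_mul (m+1) (u2+β) (v2+β)
  have hDQ2 : D (m+1) (β*u2+1) (β*v2+1) * (u2 - v2) * β
      = (β*u2+1)^(m+1) - (β*v2+1)^(m+1) := by
    linear_combination D_mul (m+1) (β*u2+1) (β*v2+1)
  have hD1 : D (m+1) u1 v1 * (u1 - v1) = u1^(m+1) - v1^(m+1) := D_mul _ _ _
  have hD3 : D (m+1) u3 v3 * (u3 - v3) = u3^(m+1) - v3^(m+1) := D_mul _ _ _
  have hD3' : D (m+2) u3 v3 * (u3 - v3) = u3^(m+2) - v3^(m+2) := D_mul _ _ _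
  have r1 : ((u3+β)^(m+1)) * (u1 - v1)
      + (v1 * D (m+1) (u3+β) (v3+β) - α * β * D (m+1) (β*u3+1) (β*v3+1)) * (u3 - v3) = 0 := by
    linear_combination e1 - f1 + v1 * hDS3 - α * hDQ3
  have r2 : (D (m+1) u1 v1 * (u2 * (u3+β)^(m+1))) * (u1 - v1)
      + (v1^(m+1) * (u3+β)^(m+1) - α * β * D (m+1) (β*u2+1) (β*v2+1) * u3^(m+1)) * (u2 - v2)
      + (v1^(m+1) * v2 * D (m+1) (u3+β) (v3+β)
          - α * (β*v2+1)^(m+1) * D (m+1) u3 v3) * (u3 - v3) = 0 := by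
    linear_combination e2 - f2 + (u2 * (u3+β)^(m+1)) * hD1 + v1^(m+1) * v2 * hDS3
      - α * u3^(m+1) * hDQ2 - α * (β*v2+1)^(m+1) * hD3
  have r3 : (-(α * D (m+1) u1 v1 * (β*u3+1)^(m+1))) * (u1 - v1)
      + (D (m+1) (u2+β) (v2+β) * u3^(m+2)) * (u2 - v2)
      + ((v2+β)^(m+1) * D (m+2) u3 v3
          - α * v1^(m+1) * β * D (m+1) (β*u3+1) (β*v3+1)) * (u3 - v3) = 0 := by
    linear_combination e3 - f3 + u3^(m+2) * hDS2 + (v2+β)^(m+1) * hD3'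
      - α * (β*u3+1)^(m+1) * hD1 - α * v1^(m+1) * hDQ3
  obtain ⟨A1, A2, A3⟩ := cramer _ _ _ _ _ _ _ _ _ _ _ r1 r2 r3
  have hmm : (m + 1) - 1 = m := by omega
  have hmm2 : (m + 2) - 1 = m + 1 := by omega
  have tDS3 : toZMod (D (m+1) (u3+β) (v3+β)) = ((m+1 : ℕ) : ZMod p) * 2 ^ m := by
    rw [toZMod_D (m+1) (by rw [map_add, hu3, hβ]; try norm_num)
      (by rw [map_add, hv3, hβ]; try norm_num), hmm]; norm_num
  have tDQ3 : toZMod (D (m+1) (β*u3+1) (β*v3+1)) = ((m+1 : ℕ) : ZMod p) * 2 ^ m := by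
    rw [toZMod_D (m+1) (by rw [map_add, map_mul, map_one, hu3, hβ]; try norm_num)
      (by rw [map_add, map_mul, map_one, hv3, hβ]; try norm_num), hmm]; norm_num
  have tDS2 : toZMod (D (m+1) (u2+β) (v2+β)) = ((m+1 : ℕ) : ZMod p) * 2 ^ m := by
    rw [toZMod_D (m+1) (by rw [map_add, hu2, hβ]; try norm_num)
      (by rw [map_add, hv2, hβ]; try norm_num), hmm]; norm_num
  have tDQ2 : toZMod (D (m+1) (β*u2+1) (β*v2+1)) = ((m+1 : ℕ) : ZMod p) * 2 ^ m := by
    rw [toZMod_D (m+1) (by rw [map_add, map_mul, map_one, hu2, hβ]; try norm_num)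
      (by rw [map_add, map_mul, map_one, hv2, hβ]; try norm_num), hmm]; norm_num
  have tD1 : toZMod (D (m+1) u1 v1) = ((m+1 : ℕ) : ZMod p) := by
    rw [toZMod_D (m+1) hu1 hv1, hmm, one_pow, mul_one]
  have tD3 : toZMod (D (m+1) u3 v3) = ((m+1 : ℕ) : ZMod p) := by
    rw [toZMod_D (m+1) hu3 hv3, hmm, one_pow, mul_one]
  have tD3' : toZMod (D (m+2) u3 v3) = ((m+2 : ℕ) : ZMod p) := by
    rw [toZMod_D (m+2) hu3 hv3, hmm2, one_pow, mul_one]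
  have hdet0 : (((u3+β)^(m+1)) *
      ((v1^(m+1) * (u3+β)^(m+1) - α * β * D (m+1) (β*u2+1) (β*v2+1) * u3^(m+1)) *
        ((v2+β)^(m+1) * D (m+2) u3 v3 - α * v1^(m+1) * β * D (m+1) (β*u3+1) (β*v3+1))
       - (v1^(m+1) * v2 * D (m+1) (u3+β) (v3+β) - α * (β*v2+1)^(m+1) * D (m+1) u3 v3) *
        (D (m+1) (u2+β) (v2+β) * u3^(m+2)))
    + (v1 * D (m+1) (u3+β) (v3+β) - α * β * D (m+1) (β*u3+1) (β*v3+1)) *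
      ((D (m+1) u1 v1 * (u2 * (u3+β)^(m+1))) * (D (m+1) (u2+β) (v2+β) * u3^(m+2))
       - (v1^(m+1) * (u3+β)^(m+1) - α * β * D (m+1) (β*u2+1) (β*v2+1) * u3^(m+1)) *
        (-(α * D (m+1) u1 v1 * (β*u3+1)^(m+1))))) ≠ 0 := by
    intro h
    have h0 := congrArg toZMod h
    rw [map_zero] at h0
    simp only [map_add, map_sub, map_mul, map_neg, map_pow, map_one,
      hu1, hu2, hu3, hv1, hv2, hv3, hα, hβ, tDS3, tDQ3, tDS2, tDQ2, tD1, tD3, tD3'] at h0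
    have h1 : (2 : ZMod p) ^ (3*m + 3) = 0 := by
      rw [← h0]; push_cast; ring
    exact pow_ne_zero _ (two_ne_zero' hp) h1
  refine ⟨sub_eq_zero.mp ?_, sub_eq_zero.mp ?_, sub_eq_zero.mp ?_⟩
  · exact (mul_eq_zero.mp A1).resolve_left hdet0
  · exact (mul_eq_zero.mp A2).resolve_left hdet0
  · exact (mul_eq_zero.mp A3).resolve_left hdet0

/-- in `ℤ_[p]`, `toZMod x ≠ 0` forces `‖x‖ = 1`. -/
lemma norm_eq_one_of_toZMod_ne {x : ℤ_[p]} (h : toZMod x ≠ 0) : ‖x‖ = 1 := by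
  refine le_antisymm x.norm_le_one ?_
  by_contra hlt
  push_neg at hlt
  exact h ((toZMod_eq_zero_iff _).2 hlt)

/-- Existence over `ℤ_[p]` : a diagonal solution via Hensel's lemma. -/
lemma exist (hp : p ≠ 2) (k : ℕ) (hk : 1 ≤ k) (α β : ℤ_[p])
    (hα : ‖α - 1‖ < 1) (hβ : ‖β - 1‖ < 1) :
    ∃ z : ℤ_[p], ‖z - 1‖ < 1 ∧ z * (z + β) ^ k - α * (β * z + 1) ^ k = 0 := by
  classical
  obtain ⟨m, rfl⟩ : ∃ m, k = m + 1 := ⟨k - 1, by omega⟩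
  have hαZ : toZMod α = 1 := toZMod_eq_one hα
  have hβZ : toZMod β = 1 := toZMod_eq_one hβ
  have hβ1 : toZMod (1 + β) = 2 := by rw [map_add, map_one, hβZ]; norm_num
  have hβ1' : toZMod (β + 1) = 2 := by rw [map_add, map_one, hβZ]; norm_num
  let F : Polynomial ℤ_[p] :=
    Polynomial.X * (Polynomial.X + Polynomial.C β) ^ (m+1)
      - Polynomial.C α * (Polynomial.C β * Polynomial.X + 1) ^ (m+1)
  have hFe : ∀ x : ℤ_[p], F.eval x = x * (x + β) ^ (m+1) - α * (β * x + 1) ^ (m+1) := by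
    intro x
    simp [F]
  have hder : F.derivative =
      (Polynomial.X + Polynomial.C β) ^ (m+1)
      + Polynomial.X * (((m : Polynomial ℤ_[p]) + 1) * (Polynomial.X + Polynomial.C β) ^ m)
      - Polynomial.C α *
          ((((m : Polynomial ℤ_[p]) + 1) * (Polynomial.C β * Polynomial.X + 1) ^ m)
            * Polynomial.C β) := by
    simp only [F, Polynomial.derivative_sub, Polynomial.derivative_mul,
      Polynomial.derivative_pow, Polynomial.derivative_X, Polynomial.derivative_C,
      Polynomial.derivative_add, Polynomial.derivative_one, Polynomial.C_eq_natCast]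
    push_cast
    ring
  have hde : F.derivative.eval 1 =
      (1 + β) ^ (m+1) + ((m:ℤ_[p])+1) * (1 + β) ^ m - α * (((m:ℤ_[p])+1) * (β + 1) ^ m * β) := by
    rw [hder]
    simp
    try ring
  have hD : ‖F.derivative.eval 1‖ = 1 := by
    apply norm_eq_one_of_toZMod_ne
    rw [hde]
    simp only [map_add, map_sub, map_mul, map_pow, map_one, map_natCast, hαZ, hβZ, hβ1, hβ1']
    intro h
    have h1 : (2 : ZMod p) ^ (m + 1) = 0 := by linear_combination h
    exact pow_ne_zero _ (two_ne_zero' hp) h1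
  have hE : ‖F.eval 1‖ < ‖F.derivative.eval 1‖ ^ 2 := by
    rw [hD, one_pow]
    have h1 : F.eval 1 = (1 + β) ^ (m+1) * (1 - α) := by rw [hFe]; ring
    rw [h1, norm_mul]
    calc ‖(1 + β) ^ (m+1)‖ * ‖1 - α‖ ≤ 1 * ‖1 - α‖ := by
          exact mul_le_mul_of_nonneg_right (PadicInt.norm_le_one _) (norm_nonneg _)
      _ = ‖α - 1‖ := by rw [one_mul, ← norm_neg]; congr 1; ring
      _ < 1 := hα
  obtain ⟨z, hz1, hz2, -, -⟩ := hensels_lemma hE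
  rw [Polynomial.coe_aeval_eq_eval] at hz1 hz2
  rw [hD] at hz2
  exact ⟨z, hz2, by rw [← hFe]; exact hz1⟩

end GUZ

open GUZ PadicInt in
theorem G_unique_zero_in_Ep_cube (p : ℕ) [Fact p.Prime] (hp : p ≠ 2)
    (k : ℕ) (hk : 1 ≤ k) (a b : ℚ_[p]) (ha : a ∈ Ep p) (hb : b ∈ Ep p)
    (hb1 : b ≠ 1) :
    ∃! u : ℚ_[p] × ℚ_[p] × ℚ_[p],
      u.1 ∈ Ep p ∧ u.2.1 ∈ Ep p ∧ u.2.2 ∈ Ep p ∧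
      u.1 * (u.2.2 + b ^ 2) ^ k - a ^ 2 * (b ^ 2 * u.2.2 + 1) ^ k = 0 ∧
      u.1 ^ k * u.2.1 * (u.2.2 + b ^ 2) ^ k -
        a ^ 2 * (b ^ 2 * u.2.1 + 1) ^ k * u.2.2 ^ k = 0 ∧
      (u.2.1 + b ^ 2) ^ k * u.2.2 ^ (k + 1) -
        a ^ 2 * u.1 ^ k * (b ^ 2 * u.2.2 + 1) ^ k = 0 ∧
      ‖u.1 - 1‖ ≤ 1 / (p : ℝ) ∧ ‖u.2.1 - 1‖ ≤ 1 / (p : ℝ) ∧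
      ‖u.2.2 - 1‖ ≤ 1 / (p : ℝ) := by
  obtain ⟨ha1, ha2⟩ := ha
  obtain ⟨hbn1, hbn2⟩ := hb
  have hp1 : (1 : ℝ) < p := by
    exact_mod_cast (Fact.out : p.Prime).one_lt
  have hple : (1 : ℝ) / p < 1 := by
    rw [div_lt_one (by linarith)]; linarith
  -- lift a, b to ℤ_[p]
  set A : ℤ_[p] := ⟨a, ha1.le⟩ with hA
  set B : ℤ_[p] := ⟨b, hbn1.le⟩ with hB
  have hAc : ((A : ℤ_[p]) : ℚ_[p]) = a := rfl
  have hBc : ((B : ℤ_[p]) : ℚ_[p]) = b := rfl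
  have hAn : ‖A - 1‖ < 1 := by
    have h0 : ‖A - 1‖ = ‖a - 1‖ := rfl
    rw [h0]
    exact lt_of_le_of_lt ha2 hple
  have hBn : ‖B - 1‖ < 1 := by
    have h0 : ‖B - 1‖ = ‖b - 1‖ := rfl
    rw [h0]
    exact lt_of_le_of_lt hbn2 hple
  set α : ℤ_[p] := A ^ 2 with hα
  set β : ℤ_[p] := B ^ 2 with hβ
  have hαc : ((α : ℤ_[p]) : ℚ_[p]) = a ^ 2 := by rw [hα, PadicInt.coe_pow, hAc]
  have hβc : ((β : ℤ_[p]) : ℚ_[p]) = b ^ 2 := by rw [hβ, PadicInt.coe_pow, hBc]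
  have hαn : ‖α - 1‖ < 1 := by
    have h1 : α - 1 = (A - 1) * (A + 1) := by rw [hα]; ring
    rw [h1, norm_mul]
    calc ‖A - 1‖ * ‖A + 1‖ ≤ ‖A - 1‖ * 1 :=
          mul_le_mul_of_nonneg_left (PadicInt.norm_le_one _) (norm_nonneg _)
      _ < 1 := by rwa [mul_one]
  have hβn : ‖β - 1‖ < 1 := by
    have h1 : β - 1 = (B - 1) * (B + 1) := by rw [hβ]; ring
    rw [h1, norm_mul]
    calc ‖B - 1‖ * ‖B + 1‖ ≤ ‖B - 1‖ * 1 :=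
          mul_le_mul_of_nonneg_left (PadicInt.norm_le_one _) (norm_nonneg _)
      _ < 1 := by rwa [mul_one]
  obtain ⟨z, hz, hzeq⟩ := GUZ.exist hp k hk α β hαn hβn
  -- norm facts about z
  have hznorm : ‖z‖ = 1 := norm_eq_one_of hz
  have hzle : ‖z - 1‖ ≤ 1 / (p : ℝ) := (norm_lt_one_iff_le _).1 hz
  have hzQnorm : ‖(z : ℚ_[p])‖ = 1 := by rw [padic_norm_e_of_padicInt]; exact hznorm
  have hzQle : ‖(z : ℚ_[p]) - 1‖ ≤ 1 / (p : ℝ) := by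
    have : ((z - 1 : ℤ_[p]) : ℚ_[p]) = (z : ℚ_[p]) - 1 := by push_cast; ring
    rw [← this, padic_norm_e_of_padicInt]
    exact hzle
  have hzEp : (z : ℚ_[p]) ∈ Ep p := ⟨hzQnorm, hzQle⟩
  -- the ℚ_[p] equation satisfied by z
  have hzeqQ : (z : ℚ_[p]) * ((z : ℚ_[p]) + b ^ 2) ^ k - a ^ 2 * (b ^ 2 * (z : ℚ_[p]) + 1) ^ k
      = 0 := congrArg Subtype.val hzeq
  refine ⟨((z : ℚ_[p]), (z : ℚ_[p]), (z : ℚ_[p])), ⟨hzEp, hzEp, hzEp, hzeqQ, ?_, ?_, hzQle,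
    hzQle, hzQle⟩, ?_⟩
  · linear_combination ((z : ℚ_[p])) ^ k * hzeqQ
  · linear_combination ((z : ℚ_[p])) ^ k * hzeqQ
  -- uniqueness
  rintro ⟨y1, y2, y3⟩ ⟨hy1, hy2, hy3, q1, q2, q3, n1, n2, n3⟩
  simp only at q1 q2 q3 n1 n2 n3
  set Y1 : ℤ_[p] := ⟨y1, hy1.1.le⟩ with hY1
  set Y2 : ℤ_[p] := ⟨y2, hy2.1.le⟩ with hY2
  set Y3 : ℤ_[p] := ⟨y3, hy3.1.le⟩ with hY3
  have hY1c : ((Y1 : ℤ_[p]) : ℚ_[p]) = y1 := rfl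
  have hY2c : ((Y2 : ℤ_[p]) : ℚ_[p]) = y2 := rfl
  have hY3c : ((Y3 : ℤ_[p]) : ℚ_[p]) = y3 := rfl
  have hcoe : ∀ x : ℤ_[p], (x : ℚ_[p]) = 0 → x = 0 := by
    intro x hx
    exact Subtype.ext hx
  have tz : toZMod z = 1 := toZMod_eq_one hz
  have tα : toZMod α = 1 := toZMod_eq_one hαn
  have tβ : toZMod β = 1 := toZMod_eq_one hβn
  have tY1 : toZMod Y1 = 1 := by
    apply toZMod_eq_one
    refine lt_of_le_of_lt ?_ hple
    have h0 : ‖Y1 - 1‖ = ‖y1 - 1‖ := rfl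
    rw [h0]
    exact n1
  have tY2 : toZMod Y2 = 1 := by
    apply toZMod_eq_one
    refine lt_of_le_of_lt ?_ hple
    have h0 : ‖Y2 - 1‖ = ‖y2 - 1‖ := rfl
    rw [h0]
    exact n2
  have tY3 : toZMod Y3 = 1 := by
    apply toZMod_eq_one
    refine lt_of_le_of_lt ?_ hple
    have h0 : ‖Y3 - 1‖ = ‖y3 - 1‖ := rfl
    rw [h0]
    exact n3
  have E1 : Y1 * (Y3 + β) ^ k - α * (β * Y3 + 1) ^ k = 0 := Subtype.ext q1
  have E2 : Y1 ^ k * Y2 * (Y3 + β) ^ k - α * (β * Y2 + 1) ^ k * Y3 ^ k = 0 := Subtype.ext q2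
  have E3 : (Y2 + β) ^ k * Y3 ^ (k + 1) - α * Y1 ^ k * (β * Y3 + 1) ^ k = 0 := Subtype.ext q3
  have F1 : z * (z + β) ^ k - α * (β * z + 1) ^ k = 0 := hzeq
  have F2 : z ^ k * z * (z + β) ^ k - α * (β * z + 1) ^ k * z ^ k = 0 := by
    linear_combination z ^ k * hzeq
  have F3 : (z + β) ^ k * z ^ (k + 1) - α * z ^ k * (β * z + 1) ^ k = 0 := by
    linear_combination z ^ k * hzeq
  obtain ⟨g1, g2, g3⟩ := uniq hp k hk α β tα tβ Y1 Y2 Y3 z z z tY1 tY2 tY3 tz tz tz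
    E1 E2 E3 F1 F2 F3
  have w1 : y1 = (z : ℚ_[p]) := by rw [← hY1c, g1]
  have w2 : y2 = (z : ℚ_[p]) := by rw [← hY2c, g2]
  have w3 : y3 = (z : ℚ_[p]) := by rw [← hY3c, g3]
  exact Prod.ext w1 (Prod.ext w2 w3)
end
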